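/- arXiv:1702.06976 — 5 statements merged into one kernel-verified Lean document; each statement's English description precedes it below -/
import Mathlib

section
/- Let X be a random vector in ℝⁿ with finite first moment, i.e. E|⟨u,X⟩| < ∞ for every u ∈ ℝⁿ. Let K = { E[λ(X)·X] : λ : ℝⁿ → ℝ measurable with −1 ≤ λ ≤ 1 }. Then K is a nonempty, closed, bounded convex subset of ℝⁿ, and its support function satisfies sup_{y ∈ K} ⟨y,θ⟩ = E|⟨X,θ⟩| for every θ ∈ ℝⁿ. Consequently K equals the centroid body ΓX. -/
open MeasureTheory ProbabilityTheory
open scoped RealInnerProductSpace ENNReal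

/-- The centroid body of a distribution `μ` on `ℝⁿ`: the (compact, convex) set whose support
function is `u ↦ E|⟨u,X⟩|`, realized as the intersection of the corresponding halfspaces. -/
noncomputable def centroidBody {n : ℕ} (μ : Measure (EuclideanSpace ℝ (Fin n))) :
    Set (EuclideanSpace ℝ (Fin n)) :=
  {y | ∀ u : EuclideanSpace ℝ (Fin n), ⟪y, u⟫ ≤ ∫ x, |⟪x, u⟫| ∂μ}

/-!
For `|λ| ≤ 1` we have `⟪E[λ(X) X], θ⟫ = E[λ(X) ⟪X, θ⟫] ≤ E|⟪X, θ⟫|`, with equality when `λ`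
is the sign of `⟪·, θ⟫`. So once `K` is known to be closed (convexity is clear), the separation
theorem identifies it with the centroid body.

Closedness is a weak compactness statement. Weighting the law of `X` by `‖x‖` turns
`λ ↦ ⟪E[λ(X) X], θ⟫` into the `L²` pairing with the bounded function `⟪x, θ⟫ / ‖x‖`. In a
Hilbert space a bounded sequence has a point in the closed convex hull of each of its tails: the
minimal-norm points of these hulls have increasing norms, hence form a Cauchy sequence by the
parallelogram law. That point is again a `[-1, 1]`-valued function, and it realizes the limit.
-/

open Filter Topology Set
open scoped NNReal

section Hilbert
variable {H : Type*} [NormedAddCommGroup H] [InnerProductSpace ℝ H]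

theorem exists_mem_forall_norm_le_of_isClosed_of_convex [CompleteSpace H] {K : Set H}
    (hne : K.Nonempty) (hcl : IsClosed K) (hconv : Convex ℝ K) :
    ∃ p ∈ K, ∀ w ∈ K, ‖p‖ ≤ ‖w‖ := by
  obtain ⟨p, hpK, hp⟩ := exists_norm_eq_iInf_of_complete_convex hne hcl.isComplete hconv 0
  refine ⟨p, hpK, fun w hw => ?_⟩
  simp only [zero_sub, norm_neg] at hp
  rw [hp]
  exact ciInf_le ⟨0, by rintro _ ⟨w, rfl⟩; exact norm_nonneg _⟩ (⟨w, hw⟩ : K)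

theorem norm_sub_sq_le_of_forall_norm_le {K : Set H} (hconv : Convex ℝ K) {p w : H}
    (hp : p ∈ K) (hmin : ∀ z ∈ K, ‖p‖ ≤ ‖z‖) (hw : w ∈ K) :
    ‖w - p‖ ^ 2 ≤ 2 * (‖w‖ ^ 2 - ‖p‖ ^ 2) := by
  have hmid : ‖p‖ ≤ ‖(1 / 2 : ℝ) • (w + p)‖ := by
    refine hmin _ ?_
    simpa [smul_add] using hconv hw hp (by norm_num : (0 : ℝ) ≤ 1 / 2)
      (by norm_num : (0 : ℝ) ≤ 1 / 2) (by norm_num)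
  rw [norm_smul, Real.norm_of_nonneg (by norm_num : (0 : ℝ) ≤ 1 / 2)] at hmid
  nlinarith [parallelogram_law_with_norm ℝ w p, norm_nonneg p, norm_nonneg (w + p)]

theorem exists_forall_mem_closure_convexHull_image_Ici [CompleteSpace H] {f : ℕ → H} {C : ℝ}
    (hf : ∀ k, ‖f k‖ ≤ C) : ∃ q, ∀ k, q ∈ closure (convexHull ℝ (f '' Ici k)) := by
  set D : ℕ → Set H := fun k => closure (convexHull ℝ (f '' Ici k))
  have hD_anti : Antitone D := fun k m hkm =>
    closure_mono (convexHull_mono (image_mono (Ici_subset_Ici.2 hkm)))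
  have hD_convex : ∀ k, Convex ℝ (D k) := fun k => (convex_convexHull ℝ _).closure
  have hfD : ∀ k, f k ∈ D k := fun k =>
    subset_closure (subset_convexHull ℝ _ (mem_image_of_mem f self_mem_Ici))
  choose p hpD hp using fun k =>
    exists_mem_forall_norm_le_of_isClosed_of_convex ⟨f k, hfD k⟩ isClosed_closure (hD_convex k)
  have hp_mono : Monotone fun k => ‖p k‖ ^ 2 := fun k m hkm =>
    pow_le_pow_left₀ (norm_nonneg _) (hp k (p m) (hD_anti hkm (hpD m))) 2
  have hp_bdd : BddAbove (range fun k => ‖p k‖ ^ 2) := ⟨C ^ 2, by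
    rintro _ ⟨k, rfl⟩
    exact pow_le_pow_left₀ (norm_nonneg _) ((hp k _ (hfD k)).trans (hf k)) 2⟩
  have hcauchy : CauchySeq p := by
    rw [Metric.cauchySeq_iff']
    intro ε hε
    have hlt : (⨆ k, ‖p k‖ ^ 2) - ε ^ 2 / 2 < ⨆ k, ‖p k‖ ^ 2 := sub_lt_self _ (by positivity)
    obtain ⟨N, hN⟩ := ((tendsto_atTop_ciSup hp_mono hp_bdd).eventually
      (Ioi_mem_nhds hlt)).exists_forall_of_atTop
    refine ⟨N, fun m hm => ?_⟩
    have hdist := norm_sub_sq_le_of_forall_norm_le (hD_convex N) (hpD N) (hp N)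
      (hD_anti hm (hpD m))
    have hsup : ‖p m‖ ^ 2 ≤ ⨆ k, ‖p k‖ ^ 2 := le_ciSup hp_bdd m
    have hN' := hN N le_rfl
    rw [dist_eq_norm]
    nlinarith [norm_nonneg (p m - p N)]
  obtain ⟨q, hq⟩ := cauchySeq_tendsto_of_complete hcauchy
  exact ⟨q, fun k => isClosed_closure.mem_of_tendsto hq
    (eventually_atTop.2 ⟨k, fun m hkm => hD_anti hkm (hpD m)⟩)⟩

end Hilbert

theorem ContinuousLinearMap.eq_of_forall_mem_closure_convexHull_image_Ici {E F : Type*}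
    [NormedAddCommGroup E] [NormedSpace ℝ E] [NormedAddCommGroup F] [NormedSpace ℝ F]
    (L : E →L[ℝ] F) {f : ℕ → E} {y : F} (hf : Tendsto (fun k => L (f k)) atTop (𝓝 y))
    {q : E} (hq : ∀ k, q ∈ closure (convexHull ℝ (f '' Ici k))) : L q = y := by
  refine eq_of_forall_dist_le fun ε hε => ?_
  obtain ⟨k, hk⟩ := eventually_atTop.1 (hf.eventually (Metric.closedBall_mem_nhds y hε))
  have hball : L '' convexHull ℝ (f '' Ici k) ⊆ Metric.closedBall y ε := by
    rw [show L '' _ = _ from (L : E →ₗ[ℝ] F).image_convexHull _, image_image]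
    exact convexHull_min (by rintro _ ⟨j, hj, rfl⟩; exact hk j hj) (convex_closedBall y ε)
  exact Metric.isClosed_closedBall.closure_subset_iff.2 hball
    (image_closure_subset_closure_image L.continuous (mem_image_of_mem L (hq k)))

namespace MeasureTheory.Lp
variable {α E : Type*} {m : MeasurableSpace α} {μ : Measure α} {p : ℝ≥0∞}
  [NormedAddCommGroup E]

theorem isClosed_setOf_ae_mem [Fact (1 ≤ p)] {s : Set E} (hs : IsClosed s) :
    IsClosed {f : Lp E p μ | ∀ᵐ x ∂μ, f x ∈ s} := by
  refine IsSeqClosed.isClosed fun f f₀ hf hf₀ => ?_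
  obtain ⟨φ, -, hφ⟩ := (tendstoInMeasure_of_tendsto_Lp hf₀).exists_seq_tendsto_ae
  filter_upwards [ae_all_iff.2 hf, hφ] with x hx hφx
  exact hs.mem_of_tendsto hφx (Eventually.of_forall fun k => hx _)

theorem convex_setOf_ae_mem [NormedSpace ℝ E] {s : Set E} (hs : Convex ℝ s) :
    Convex ℝ {f : Lp E p μ | ∀ᵐ x ∂μ, f x ∈ s} := by
  intro f hf g hg a b ha hb hab
  filter_upwards [hf, hg, Lp.coeFn_add (a • f) (b • g), Lp.coeFn_smul a f, Lp.coeFn_smul b g]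
    with x hfx hgx hadd hf' hg'
  rw [hadd, Pi.add_apply, hf', hg']
  exact hs hfx hgx ha hb hab

theorem exists_measurable_forall_mem_Icc_ae_eq {a b : ℝ} (hab : a ≤ b) {f : Lp ℝ p μ}
    (hf : ∀ᵐ x ∂μ, f x ∈ Icc a b) :
    ∃ g : α → ℝ, Measurable g ∧ (∀ x, g x ∈ Icc a b) ∧ f =ᵐ[μ] g := by
  refine ⟨fun x => projIcc a b hab (f x), (continuous_subtype_val.comp
    continuous_projIcc).measurable.comp (Lp.stronglyMeasurable f).measurable,
    fun x => (projIcc a b hab (f x)).2, ?_⟩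
  filter_upwards [hf] with x hx
  simp [projIcc_of_mem hab hx]

end MeasureTheory.Lp

section NormedSpace
variable {α E : Type*} [MeasurableSpace α] {μ : Measure α} [NormedAddCommGroup E]
  [NormedSpace ℝ E] {v : α → E}

def weightedIntegralSet (μ : Measure α) (v : α → E) : Set E :=
  {y | ∃ lam : α → ℝ, Measurable lam ∧ (∀ x, lam x ∈ Icc (-1 : ℝ) 1) ∧
    y = ∫ x, lam x • v x ∂μ}

theorem zero_mem_weightedIntegralSet : (0 : E) ∈ weightedIntegralSet μ v :=
  ⟨0, measurable_const, fun _ => by norm_num, by simp⟩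

theorem MeasureTheory.Integrable.smul_of_forall_mem_Icc (hv : Integrable v μ) {lam : α → ℝ}
    (hlam : Measurable lam) (hlam_mem : ∀ x, lam x ∈ Icc (-1 : ℝ) 1) :
    Integrable (fun x => lam x • v x) μ :=
  hv.bdd_smul 1 hlam.aestronglyMeasurable (ae_of_all _ fun x => abs_le.2 (hlam_mem x))

theorem convex_weightedIntegralSet (hv : Integrable v μ) :
    Convex ℝ (weightedIntegralSet μ v) := by
  rintro _ ⟨l₁, hl₁, hl₁_mem, rfl⟩ _ ⟨l₂, hl₂, hl₂_mem, rfl⟩ a b ha hb hab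
  refine ⟨a • l₁ + b • l₂, (hl₁.const_smul a).add (hl₂.const_smul b),
    fun x => convex_Icc (-1 : ℝ) 1 (hl₁_mem x) (hl₂_mem x) ha hb hab, ?_⟩
  have h₁ : Integrable (fun x => a • l₁ x • v x) μ :=
    (hv.smul_of_forall_mem_Icc hl₁ hl₁_mem).smul a
  have h₂ : Integrable (fun x => b • l₂ x • v x) μ :=
    (hv.smul_of_forall_mem_Icc hl₂ hl₂_mem).smul b
  rw [← integral_smul, ← integral_smul, ← integral_add h₁ h₂]
  simp only [Pi.add_apply, Pi.smul_apply, smul_eq_mul, add_smul, mul_smul]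

theorem weightedIntegralSet_subset_closedBall (hv : Integrable v μ) :
    weightedIntegralSet μ v ⊆ Metric.closedBall 0 (∫ x, ‖v x‖ ∂μ) := by
  rintro _ ⟨lam, hlam, hlam_mem, rfl⟩
  rw [mem_closedBall_zero_iff]
  refine (norm_integral_le_integral_norm _).trans (integral_mono
    (hv.smul_of_forall_mem_Icc hlam hlam_mem).norm hv.norm fun x => ?_)
  rw [norm_smul]
  exact mul_le_of_le_one_left (norm_nonneg _) (abs_le.2 (hlam_mem x))

end NormedSpace

section InnerProductSpace
variable {α E : Type*} [MeasurableSpace α] {μ : Measure α} [NormedAddCommGroup E]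
  [InnerProductSpace ℝ E] {v : α → E}

theorem memLp_inner_div_norm [IsFiniteMeasure μ] (hv : AEStronglyMeasurable v μ) (θ : E)
    (p : ℝ≥0∞) : MemLp (fun x => ⟪v x, θ⟫ / ‖v x‖) p μ := by
  refine MemLp.of_bound (hv.inner_const.aemeasurable.div hv.norm.aemeasurable).aestronglyMeasurable
    ‖θ‖ (ae_of_all _ fun x => ?_)
  rw [norm_div, norm_norm]
  exact div_le_of_le_mul₀ (norm_nonneg _) (norm_nonneg θ)
    ((norm_inner_le_norm _ _).trans_eq (mul_comm _ _))

theorem integral_mul_inner_div_norm_withDensity (θ : E)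
    (hv : AEMeasurable (fun x => ‖v x‖₊) μ) (g : α → ℝ) :
    ∫ x, g x * (⟪v x, θ⟫ / ‖v x‖) ∂μ.withDensity (fun x => ‖v x‖₊) =
      ∫ x, g x * ⟪v x, θ⟫ ∂μ := by
  rw [integral_withDensity_eq_integral_smul₀ hv]
  congr 1 with x
  rw [NNReal.smul_def, smul_eq_mul, coe_nnnorm]
  rcases eq_or_ne (v x) 0 with h | h
  · simp [h]
  · field_simp

theorem inner_toLp_inner_div_norm (hv : AEMeasurable (fun x => ‖v x‖₊) μ) (θ : E)
    (hU : MemLp (fun x => ⟪v x, θ⟫ / ‖v x‖) 2 (μ.withDensity fun x => ‖v x‖₊))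
    {G : Lp ℝ 2 (μ.withDensity fun x => ‖v x‖₊)} {g : α → ℝ}
    (hG : G =ᵐ[μ.withDensity fun x => ‖v x‖₊] g) :
    ⟪hU.toLp, G⟫ = ∫ x, g x * ⟪v x, θ⟫ ∂μ := by
  rw [L2.inner_def, ← integral_mul_inner_div_norm_withDensity θ hv]
  refine integral_congr_ae ?_
  filter_upwards [hG, hU.coeFn_toLp] with x hGx hUx
  rw [hGx, hUx, Real.inner_apply, mul_comm]

variable [CompleteSpace E]

theorem inner_integral_smul_of_forall_mem_Icc (hv : Integrable v μ) {lam : α → ℝ}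
    (hlam : Measurable lam) (hlam_mem : ∀ x, lam x ∈ Icc (-1 : ℝ) 1) (θ : E) :
    ⟪∫ x, lam x • v x ∂μ, θ⟫ = ∫ x, lam x * ⟪v x, θ⟫ ∂μ := by
  rw [real_inner_comm, ← integral_inner (hv.smul_of_forall_mem_Icc hlam hlam_mem)]
  simp only [real_inner_smul_right, real_inner_comm]

theorem inner_le_integral_abs_of_mem_weightedIntegralSet (hv : Integrable v μ) {y : E}
    (hy : y ∈ weightedIntegralSet μ v) (θ : E) :
    ⟪y, θ⟫ ≤ ∫ x, |⟪v x, θ⟫| ∂μ := by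
  obtain ⟨lam, hlam, hlam_mem, rfl⟩ := hy
  have hvθ : Integrable (fun x => ⟪v x, θ⟫) μ := hv.inner_const θ
  rw [inner_integral_smul_of_forall_mem_Icc hv hlam hlam_mem]
  refine integral_mono (hvθ.bdd_mul hlam.aestronglyMeasurable
    (ae_of_all _ fun x => abs_le.2 (hlam_mem x))) hvθ.abs fun x => ?_
  calc lam x * ⟪v x, θ⟫ ≤ |lam x| * |⟪v x, θ⟫| := abs_mul (lam x) _ ▸ le_abs_self _
    _ ≤ |⟪v x, θ⟫| := mul_le_of_le_one_left (abs_nonneg _) (abs_le.2 (hlam_mem x))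

theorem exists_inner_eq_integral_abs (hv : Integrable v μ) (θ : E) :
    ∃ y ∈ weightedIntegralSet μ v, ⟪y, θ⟫ = ∫ x, |⟪v x, θ⟫| ∂μ := by
  obtain ⟨w, hw, hvw⟩ : AEStronglyMeasurable (fun x => ⟪v x, θ⟫) μ := hv.1.inner_const
  have hsign : Measurable fun x => if 0 ≤ w x then (1 : ℝ) else -1 :=
    Measurable.ite (measurableSet_le measurable_const hw.measurable)
      measurable_const measurable_const
  have hsign_mem : ∀ x, (if 0 ≤ w x then (1 : ℝ) else -1) ∈ Icc (-1 : ℝ) 1 := by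
    intro x; split_ifs <;> norm_num
  refine ⟨_, ⟨_, hsign, hsign_mem, rfl⟩, ?_⟩
  rw [inner_integral_smul_of_forall_mem_Icc hv hsign hsign_mem]
  refine integral_congr_ae ?_
  filter_upwards [hvw] with x hx
  simp only [hx]
  split_ifs with h
  · rw [one_mul, abs_of_nonneg h]
  · rw [neg_one_mul, abs_of_neg (not_le.1 h)]

theorem isGreatest_inner_weightedIntegralSet (hv : Integrable v μ) (θ : E) :
    IsGreatest ((fun y => ⟪y, θ⟫) '' weightedIntegralSet μ v)
      (∫ x, |⟪v x, θ⟫| ∂μ) := by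
  obtain ⟨y, hy, hyθ⟩ := exists_inner_eq_integral_abs hv θ
  exact ⟨⟨y, hy, hyθ⟩, by
    rintro _ ⟨z, hz, rfl⟩; exact inner_le_integral_abs_of_mem_weightedIntegralSet hv hz θ⟩

theorem isClosed_weightedIntegralSet (hv : Integrable v μ) :
    IsClosed (weightedIntegralSet μ v) := by
  refine IsSeqClosed.isClosed fun ys y hys hy => ?_
  choose lam hlam hlam_mem hys_eq using hys
  set ν := μ.withDensity (fun x => ‖v x‖₊)
  have hν : AEMeasurable (fun x => ‖v x‖₊) μ := hv.1.nnnorm.aemeasurable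
  have : IsFiniteMeasure ν := isFiniteMeasure_withDensity hv.2.ne
  have hmemLp : ∀ k, MemLp (lam k) 2 ν := fun k =>
    MemLp.of_bound (hlam k).aestronglyMeasurable 1 (ae_of_all _ fun x => abs_le.2 (hlam_mem k x))
  set F : ℕ → Lp ℝ 2 ν := fun k => (hmemLp k).toLp
  have hF : ∀ k, ∀ᵐ x ∂ν, F k x ∈ Icc (-1 : ℝ) 1 := fun k => by
    filter_upwards [(hmemLp k).coeFn_toLp] with x hx
    rw [hx]; exact hlam_mem k x
  obtain ⟨q, hq⟩ := exists_forall_mem_closure_convexHull_image_Ici (f := F) fun k =>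
    Lp.norm_le_of_ae_bound zero_le_one ((hF k).mono fun x hx => abs_le.2 hx)
  have hq_mem : ∀ᵐ x ∂ν, q x ∈ Icc (-1 : ℝ) 1 :=
    closure_minimal (convexHull_min (by rintro _ ⟨k, -, rfl⟩; exact hF k)
      (Lp.convex_setOf_ae_mem (convex_Icc _ _))) (Lp.isClosed_setOf_ae_mem isClosed_Icc) (hq 0)
  obtain ⟨lam', hlam', hlam'_mem, hq_eq⟩ := Lp.exists_measurable_forall_mem_Icc_ae_eq
    (by norm_num) hq_mem
  refine ⟨lam', hlam', hlam'_mem, ext_inner_right ℝ fun θ => ?_⟩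
  have hU : MemLp (fun x => ⟪v x, θ⟫ / ‖v x‖) 2 ν :=
    memLp_inner_div_norm (hv.1.mono_ac (withDensity_absolutelyContinuous _ _)) θ 2
  calc ⟪y, θ⟫ = innerSL ℝ hU.toLp q := by
        refine ((innerSL ℝ hU.toLp).eq_of_forall_mem_closure_convexHull_image_Ici ?_ hq).symm
        have hF_inner : ∀ k, innerSL ℝ hU.toLp (F k) = ⟪ys k, θ⟫ := fun k => by
          rw [innerSL_apply_apply, inner_toLp_inner_div_norm hν θ hU (hmemLp k).coeFn_toLp,
            hys_eq, inner_integral_smul_of_forall_mem_Icc hv (hlam k) (hlam_mem k)]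
        simpa only [hF_inner] using hy.inner tendsto_const_nhds
    _ = ⟪∫ x, lam' x • v x ∂μ, θ⟫ := by
        rw [innerSL_apply_apply, inner_toLp_inner_div_norm hν θ hU hq_eq,
          inner_integral_smul_of_forall_mem_Icc hv hlam' hlam'_mem]

theorem weightedIntegralSet_eq_setOf_inner_le (hv : Integrable v μ) :
    weightedIntegralSet μ v = {y | ∀ θ, ⟪y, θ⟫ ≤ ∫ x, |⟪v x, θ⟫| ∂μ} := by
  refine Subset.antisymm (fun y hy θ => inner_le_integral_abs_of_mem_weightedIntegralSet hv hy θ)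
    fun z hz => ?_
  by_contra hzS
  obtain ⟨f, u, hfu, huf⟩ := geometric_hahn_banach_closed_point (convex_weightedIntegralSet hv)
    (isClosed_weightedIntegralSet hv) hzS
  set θ := (InnerProductSpace.toDual ℝ E).symm f
  have hf : ∀ w, f w = ⟪w, θ⟫ := fun w => by
    rw [real_inner_comm, InnerProductSpace.toDual_symm_apply]
  obtain ⟨y, hy, hyθ⟩ := exists_inner_eq_integral_abs hv θ
  have hyu := hfu y hy
  rw [hf] at hyu huf
  linarith [hz θ]

end InnerProductSpace

theorem MeasureTheory.Integrable.of_forall_integrable_abs_inner {α E : Type*}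
    [MeasurableSpace α] {μ : Measure α} [NormedAddCommGroup E] [InnerProductSpace ℝ E]
    [FiniteDimensional ℝ E] {f : α → E} (hf : AEStronglyMeasurable f μ)
    (h : ∀ u, Integrable (fun x => |⟪f x, u⟫|) μ) : Integrable f μ := by
  set b := stdOrthonormalBasis ℝ E
  refine (integrable_finsetSum Finset.univ fun i _ => h (b i)).mono' hf (ae_of_all _ fun x => ?_)
  calc ‖f x‖ = ‖∑ i, ⟪b i, f x⟫ • b i‖ := by rw [b.sum_repr']
    _ ≤ ∑ i, ‖⟪b i, f x⟫ • b i‖ := norm_sum_le _ _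
    _ = ∑ i, |⟪f x, b i⟫| := by simp [norm_smul, real_inner_comm]

theorem centroid_body_dual_characterization_general
    {n : ℕ} {Ω : Type*} [MeasureSpace Ω]
    (X : Ω → EuclideanSpace ℝ (Fin n)) (hX : Measurable X)
    (hint : ∀ u : EuclideanSpace ℝ (Fin n), Integrable (fun ω => |⟪X ω, u⟫|) ℙ) :
    let K : Set (EuclideanSpace ℝ (Fin n)) :=
      {y | ∃ lam : EuclideanSpace ℝ (Fin n) → ℝ, Measurable lam ∧
        (∀ x, lam x ∈ Set.Icc (-1 : ℝ) 1) ∧ y = ∫ ω, lam (X ω) • X ω}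
    K.Nonempty ∧ IsClosed K ∧ Bornology.IsBounded K ∧ Convex ℝ K ∧
      (∀ θ : EuclideanSpace ℝ (Fin n),
        sSup ((fun y => ⟪y, θ⟫) '' K) = ∫ ω, |⟪X ω, θ⟫|) ∧
      K = centroidBody (Measure.map X ℙ) := by
  intro K
  set μ := Measure.map X ℙ
  have hμ_abs : ∀ θ, ∫ x, |⟪x, θ⟫| ∂μ = ∫ ω, |⟪X ω, θ⟫| := fun θ =>
    integral_map hX.aemeasurable (continuous_id.inner continuous_const).abs.aestronglyMeasurable
  have hid : Integrable id μ := (integrable_map_measure aestronglyMeasurable_id hX.aemeasurable).2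
    (Integrable.of_forall_integrable_abs_inner hX.aestronglyMeasurable hint)
  have hK : K = weightedIntegralSet μ id := by
    ext y
    refine exists_congr fun lam => and_congr_right fun hlam => and_congr_right fun _ => ?_
    rw [integral_map (f := fun x => lam x • id x) hX.aemeasurable
      (hlam.smul measurable_id).aestronglyMeasurable]
    rfl
  rw [hK]
  refine ⟨⟨0, zero_mem_weightedIntegralSet⟩, isClosed_weightedIntegralSet hid,
    Metric.isBounded_closedBall.subset (weightedIntegralSet_subset_closedBall hid),
    convex_weightedIntegralSet hid, fun θ => ?_, weightedIntegralSet_eq_setOf_inner_le hid⟩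
  rw [← hμ_abs]
  exact (isGreatest_inner_weightedIntegralSet hid θ).csSup_eq

/-- the dual characterization of the centroid body.  The set
`K = { E[λ(X)·X] : λ measurable, -1 ≤ λ ≤ 1 }` is a nonempty closed bounded convex set whose
support function is `θ ↦ E|⟨X,θ⟫|`, and `K` equals the centroid body `ΓX`. -/
theorem centroid_body_dual_characterization
    {n : ℕ} {Ω : Type*} [MeasureSpace Ω] [IsProbabilityMeasure (ℙ : Measure Ω)]
    (X : Ω → EuclideanSpace ℝ (Fin n)) (hX : Measurable X)
    (hint : ∀ u : EuclideanSpace ℝ (Fin n), Integrable (fun ω => |⟪X ω, u⟫|) ℙ) :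
    let K : Set (EuclideanSpace ℝ (Fin n)) :=
      {y | ∃ lam : EuclideanSpace ℝ (Fin n) → ℝ, Measurable lam ∧
        (∀ x, lam x ∈ Set.Icc (-1 : ℝ) 1) ∧ y = ∫ ω, lam (X ω) • X ω}
    K.Nonempty ∧ IsClosed K ∧ Bornology.IsBounded K ∧ Convex ℝ K ∧
      (∀ θ : EuclideanSpace ℝ (Fin n),
        sSup ((fun y => ⟪y, θ⟫) '' K) = ∫ ω, |⟪X ω, θ⟫|) ∧
      K = centroidBody (Measure.map X ℙ) :=
  centroid_body_dual_characterization_general X hX hint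
end

section
/- Let X be a real-valued symmetric random variable with E(|X|^{1+γ}) ≤ M for some M > 1 and 0 < γ < 1, let X⁽¹⁾,…,X⁽ᴺ⁾ be i.i.d. copies of X, and let Ẽ_N[|X|] = (|X⁽¹⁾| + ⋯ + |X⁽ᴺ⁾|)/N. Then for every ε ∈ (0,1), if N ≥ (8M/ε)^{1/2 + 1/γ}, we have P( |Ẽ_N[|X|] − E|X|| > ε ) ≤ 8M / (ε² N^{γ/3}). -/
/-!
Truncate at level `B = N`. With `Z = min |X| B`, the bias `E|X| - E Z` is at most
`E|X|^(1+γ) / B^γ`, `Var Z ≤ B^(1-γ) E|X|^(1+γ)`, and by Markov and a union bound some `|X⁽ⁱ⁾|`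
exceeds `B` with probability at most `N E|X|^(1+γ) / B^(1+γ)`. Off that event the empirical mean
is that of the truncated copies, and Chebyshev applies to their sum. At `B = N` both error terms
are `O(M / (ε² N^γ))`, and the lower bound on `N` gives `N^γ ≥ 8M/ε`, which makes the bias at
most `ε/2`.
-/

open MeasureTheory ProbabilityTheory
open scoped ENNReal

lemma sub_min_le_rpow_div {t B γ : ℝ} (ht : 0 ≤ t) (hB : 0 < B) (hγ : 0 ≤ γ) :
    t - min t B ≤ t ^ (1 + γ) / B ^ γ := by
  rcases le_total t B with htB | hBt
  · rw [min_eq_left htB, sub_self]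
    positivity
  · have hBt' : B ^ γ ≤ t ^ γ := Real.rpow_le_rpow hB.le hBt hγ
    rw [min_eq_right hBt, le_div_iff₀ (by positivity), Real.rpow_add (hB.trans_le hBt),
      Real.rpow_one]
    nlinarith [Real.rpow_nonneg hB.le γ]

lemma min_sq_le_rpow_mul {t B γ : ℝ} (ht : 0 ≤ t) (hB : 0 ≤ B) (hγ₀ : -1 ≤ γ) (hγ₁ : γ ≤ 1) :
    min t B ^ 2 ≤ B ^ (1 - γ) * t ^ (1 + γ) := by
  rcases (le_min ht hB).eq_or_lt with hs | hs
  · rw [← hs, zero_pow two_ne_zero]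
    positivity
  · calc min t B ^ 2 = min t B ^ (1 - γ) * min t B ^ (1 + γ) := by
          rw [← Real.rpow_add hs, ← Real.rpow_natCast]
          norm_num
      _ ≤ B ^ (1 - γ) * t ^ (1 + γ) := by
          gcongr
          · exact min_le_right t B
          · linarith
          · exact min_le_left t B

lemma le_rpow_of_rpow_le_of_one_le_mul {a x p γ : ℝ} (ha : 1 ≤ a) (hγ : 0 ≤ γ)
    (hpγ : 1 ≤ p * γ) (h : a ^ p ≤ x) : a ≤ x ^ γ :=
  calc a ≤ a ^ (p * γ) := Real.self_le_rpow_of_one_le ha hpγ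
    _ = (a ^ p) ^ γ := Real.rpow_mul (by linarith) _ _
    _ ≤ x ^ γ := by gcongr

section Truncation

variable {Ω ι : Type*} [MeasurableSpace Ω] {μ : Measure Ω} {Y : Ω → ℝ} {γ B M : ℝ}

lemma integrable_of_integrable_rpow_one_add [IsFiniteMeasure μ] (hY : AEMeasurable Y μ)
    (hY₀ : ∀ ω, 0 ≤ Y ω) (hγ : 0 ≤ γ) (hint : Integrable (fun ω ↦ Y ω ^ (1 + γ)) μ) :
    Integrable Y μ := by
  refine ((integrable_const 1).add hint).mono' hY.aestronglyMeasurable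
    (ae_of_all _ fun ω ↦ ?_)
  rw [Real.norm_of_nonneg (hY₀ ω), Pi.add_apply]
  rcases le_total (Y ω) 1 with h | h
  · linarith [Real.rpow_nonneg (hY₀ ω) (1 + γ)]
  · linarith [Real.self_le_rpow_of_one_le h (by linarith : 1 ≤ 1 + γ)]

lemma memLp_min_const [IsFiniteMeasure μ] (hY : AEMeasurable Y μ) (hY₀ : ∀ ω, 0 ≤ Y ω)
    (hB : 0 ≤ B) (p : ℝ≥0∞) : MemLp (fun ω ↦ min (Y ω) B) p μ := by
  refine MemLp.of_bound (hY.min aemeasurable_const).aestronglyMeasurable B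
    (ae_of_all _ fun ω ↦ ?_)
  rw [Real.norm_of_nonneg (le_min (hY₀ ω) hB)]
  exact min_le_right _ _

lemma abs_integral_sub_integral_min_le [IsFiniteMeasure μ] (hY : AEMeasurable Y μ)
    (hY₀ : ∀ ω, 0 ≤ Y ω) (hγ : 0 ≤ γ) (hB : 0 < B)
    (hint : Integrable (fun ω ↦ Y ω ^ (1 + γ)) μ) :
    |∫ ω, Y ω ∂μ - ∫ ω, min (Y ω) B ∂μ| ≤ (∫ ω, Y ω ^ (1 + γ) ∂μ) / B ^ γ := by
  have hZ := (memLp_min_const hY hY₀ hB.le 1).integrable le_rfl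
  have hY₁ := integrable_of_integrable_rpow_one_add hY hY₀ hγ hint
  rw [← integral_sub hY₁ hZ, ← integral_div,
    abs_of_nonneg (integral_nonneg fun ω ↦ sub_nonneg.2 (min_le_left _ _))]
  exact integral_mono (hY₁.sub hZ) (hint.div_const _) fun ω ↦
    sub_min_le_rpow_div (hY₀ ω) hB hγ

lemma variance_min_const_le [IsProbabilityMeasure μ] (hY : AEMeasurable Y μ)
    (hY₀ : ∀ ω, 0 ≤ Y ω) (hγ₀ : -1 ≤ γ) (hγ₁ : γ ≤ 1) (hB : 0 ≤ B)
    (hint : Integrable (fun ω ↦ Y ω ^ (1 + γ)) μ) :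
    variance (fun ω ↦ min (Y ω) B) μ ≤ B ^ (1 - γ) * ∫ ω, Y ω ^ (1 + γ) ∂μ := by
  have hZ := memLp_min_const hY hY₀ hB 2
  calc variance (fun ω ↦ min (Y ω) B) μ ≤ ∫ ω, min (Y ω) B ^ 2 ∂μ :=
        variance_le_expectation_sq hZ.aestronglyMeasurable
    _ ≤ ∫ ω, B ^ (1 - γ) * Y ω ^ (1 + γ) ∂μ :=
        integral_mono hZ.integrable_sq (hint.const_mul _)
          fun ω ↦ min_sq_le_rpow_mul (hY₀ ω) hB hγ₀ hγ₁
    _ = B ^ (1 - γ) * ∫ ω, Y ω ^ (1 + γ) ∂μ := integral_const_mul _ _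

lemma measure_lt_le_integral_rpow_div [IsFiniteMeasure μ] {p : ℝ} (hY₀ : ∀ ω, 0 ≤ Y ω)
    (hp : 0 ≤ p) (hB : 0 < B) (hint : Integrable (fun ω ↦ Y ω ^ p) μ) :
    μ {ω | B < Y ω} ≤ ENNReal.ofReal ((∫ ω, Y ω ^ p ∂μ) / B ^ p) := by
  have hBp : 0 < B ^ p := Real.rpow_pos_of_pos hB p
  calc μ {ω | B < Y ω} ≤ μ {ω | B ^ p ≤ Y ω ^ p} :=
        measure_mono fun ω hω ↦ Real.rpow_le_rpow hB.le hω.le hp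
    _ = ENNReal.ofReal (μ.real {ω | B ^ p ≤ Y ω ^ p}) :=
        (ofReal_measureReal (measure_ne_top _ _)).symm
    _ ≤ ENNReal.ofReal ((∫ ω, Y ω ^ p ∂μ) / B ^ p) := by
        refine ENNReal.ofReal_le_ofReal ((le_div_iff₀ hBp).2 ?_)
        rw [mul_comm]
        exact mul_meas_ge_le_integral_of_nonneg
          (ae_of_all _ fun ω ↦ Real.rpow_nonneg (hY₀ ω) p) hint _

variable [Fintype ι]

lemma measure_exists_lt_le_card_mul {Ys : ι → Ω → ℝ}
    (hident : ∀ i, IdentDistrib (Ys i) Y μ μ) (B : ℝ) :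
    μ {ω | ∃ i, B < Ys i ω} ≤ Fintype.card ι * μ {ω | B < Y ω} := by
  calc μ {ω | ∃ i, B < Ys i ω} = μ (⋃ i, Ys i ⁻¹' Set.Ioi B) := by congr 1; ext; simp
    _ ≤ ∑ i, μ (Ys i ⁻¹' Set.Ioi B) := measure_iUnion_fintype_le _ _
    _ = ∑ _i : ι, μ {ω | B < Y ω} :=
        Finset.sum_congr rfl fun i _ ↦ (hident i).measure_mem_eq measurableSet_Ioi
    _ = Fintype.card ι * μ {ω | B < Y ω} := by simp

lemma measure_le_abs_sum_sub_card_mul_integral_le [IsFiniteMeasure μ] {Z : Ω → ℝ}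
    {Zs : ι → Ω → ℝ} (hZ : MemLp Z 2 μ) (hind : iIndepFun Zs μ)
    (hident : ∀ i, IdentDistrib (Zs i) Z μ μ) {t : ℝ} (ht : 0 < t) :
    μ {ω | t ≤ |∑ i, Zs i ω - Fintype.card ι * ∫ ω, Z ω ∂μ|} ≤
      ENNReal.ofReal (Fintype.card ι * variance Z μ / t ^ 2) := by
  have hZs : ∀ i, MemLp (Zs i) 2 μ := fun i ↦ (hident i).symm.memLp_snd hZ
  have hmean : μ[∑ i, Zs i] = Fintype.card ι * ∫ ω, Z ω ∂μ := by
    simp [integral_finsetSum _ fun i _ ↦ (hZs i).integrable one_le_two,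
      fun i ↦ (hident i).integral_eq]
  have hvar : variance (∑ i, Zs i) μ = Fintype.card ι * variance Z μ := by
    rw [IndepFun.variance_sum (fun i _ ↦ hZs i) fun i _ j _ hij ↦ hind.indepFun hij]
    simp [fun i ↦ (hident i).variance_eq]
  have := meas_ge_le_variance_div_sq (memLp_finsetSum' Finset.univ fun i _ ↦ hZs i) ht
  rw [hmean, hvar] at this
  simpa only [Finset.sum_apply] using this

lemma exists_lt_or_le_abs_sum_min_sub (y : ι → ℝ) {m m' ε : ℝ} (B : ℝ)
    (hm : |m - m'| ≤ ε / 2) (h : ε < |(∑ i, y i) / Fintype.card ι - m|) :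
    (∃ i, B < y i) ∨ Fintype.card ι * ε / 2 ≤ |∑ i, min (y i) B - Fintype.card ι * m'| := by
  refine or_iff_not_imp_left.2 fun hy ↦ ?_
  push Not at hy
  have hsum : ∑ i, min (y i) B = ∑ i, y i := Finset.sum_congr rfl fun i _ ↦ min_eq_left (hy i)
  rw [hsum]
  set n : ℝ := (Fintype.card ι : ℝ)
  have hn₀ : 0 ≤ n := Nat.cast_nonneg _
  rcases hn₀.eq_or_lt with hn | hn
  · rw [← hn]
    simp
  have hdev : n * ε ≤ |∑ i, y i - n * m| := by
    calc n * ε ≤ n * |(∑ i, y i) / n - m| := by gcongr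
      _ = |∑ i, y i - n * m| := by
          rw [← abs_of_pos hn, ← abs_mul, abs_of_pos hn, mul_sub, mul_div_cancel₀ _ hn.ne']
  have hshift : |n * m - n * m'| ≤ n * (ε / 2) := by
    rw [← mul_sub, abs_mul, abs_of_pos hn]
    gcongr
  linarith [abs_sub_le (∑ i, y i) (n * m') (n * m), abs_sub_comm (n * m) (n * m')]

lemma measure_le_abs_sum_min_sub_le [IsProbabilityMeasure μ] [Nonempty ι] {Ys : ι → Ω → ℝ}
    {ε : ℝ} (hY : AEMeasurable Y μ) (hY₀ : ∀ ω, 0 ≤ Y ω) (hγ₀ : -1 ≤ γ) (hγ₁ : γ ≤ 1)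
    (hint : Integrable (fun ω ↦ Y ω ^ (1 + γ)) μ) (hmom : ∫ ω, Y ω ^ (1 + γ) ∂μ ≤ M)
    (hind : iIndepFun Ys μ) (hident : ∀ i, IdentDistrib (Ys i) Y μ μ) (hB : 0 ≤ B)
    (hε : 0 < ε) :
    μ {ω | Fintype.card ι * ε / 2 ≤
        |∑ i, min (Ys i ω) B - Fintype.card ι * ∫ ω, min (Y ω) B ∂μ|} ≤
      ENNReal.ofReal (4 * B ^ (1 - γ) * M / (Fintype.card ι * ε ^ 2)) := by
  set n : ℝ := (Fintype.card ι : ℝ)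
  have hn : 0 < n := Nat.cast_pos.2 Fintype.card_pos
  have hmin : Measurable fun x : ℝ ↦ min x B := measurable_id.min measurable_const
  refine (measure_le_abs_sum_sub_card_mul_integral_le (memLp_min_const hY hY₀ hB 2)
    (hind.comp _ fun _ ↦ hmin) (fun i ↦ (hident i).comp hmin) (by positivity)).trans
    (ENNReal.ofReal_le_ofReal ?_)
  calc n * variance (fun ω ↦ min (Y ω) B) μ / (n * ε / 2) ^ 2
      = 4 * variance (fun ω ↦ min (Y ω) B) μ / (n * ε ^ 2) := by
        field_simp
        ring
    _ ≤ 4 * (B ^ (1 - γ) * M) / (n * ε ^ 2) := by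
        gcongr
        exact (variance_min_const_le hY hY₀ hγ₀ hγ₁ hB hint).trans (by gcongr)
    _ = 4 * B ^ (1 - γ) * M / (n * ε ^ 2) := by ring

theorem measure_lt_abs_sum_div_card_sub_integral_le [IsProbabilityMeasure μ] [Nonempty ι]
    {Ys : ι → Ω → ℝ} {ε : ℝ}
    (hY : AEMeasurable Y μ) (hY₀ : ∀ ω, 0 ≤ Y ω) (hγ₀ : 0 ≤ γ) (hγ₁ : γ ≤ 1)
    (hint : Integrable (fun ω ↦ Y ω ^ (1 + γ)) μ) (hmom : ∫ ω, Y ω ^ (1 + γ) ∂μ ≤ M)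
    (hind : iIndepFun Ys μ) (hident : ∀ i, IdentDistrib (Ys i) Y μ μ)
    (hB : 0 < B) (hε : 0 < ε) (hbias : M / B ^ γ ≤ ε / 2) :
    μ {ω | ε < |(∑ i, Ys i ω) / Fintype.card ι - ∫ ω, Y ω ∂μ|} ≤
      ENNReal.ofReal (Fintype.card ι * (M / B ^ (1 + γ)) +
        4 * B ^ (1 - γ) * M / (Fintype.card ι * ε ^ 2)) := by
  set n : ℝ := (Fintype.card ι : ℝ)
  have hn : 0 < n := Nat.cast_pos.2 Fintype.card_pos
  have hM : 0 ≤ M := (integral_nonneg fun ω ↦ Real.rpow_nonneg (hY₀ ω) _).trans hmom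
  have hbias' : |∫ ω, Y ω ∂μ - ∫ ω, min (Y ω) B ∂μ| ≤ ε / 2 :=
    (abs_integral_sub_integral_min_le hY hY₀ hγ₀ hB hint).trans
      ((div_le_div_of_nonneg_right hmom (by positivity)).trans hbias)
  have htail : μ {ω | ∃ i, B < Ys i ω} ≤ ENNReal.ofReal (n * (M / B ^ (1 + γ))) :=
    calc μ {ω | ∃ i, B < Ys i ω} ≤ Fintype.card ι * μ {ω | B < Y ω} :=
        measure_exists_lt_le_card_mul hident B
      _ ≤ Fintype.card ι * ENNReal.ofReal ((∫ ω, Y ω ^ (1 + γ) ∂μ) / B ^ (1 + γ)) := by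
          gcongr
          exact measure_lt_le_integral_rpow_div hY₀ (by linarith) hB hint
      _ ≤ Fintype.card ι * ENNReal.ofReal (M / B ^ (1 + γ)) := by gcongr
      _ = ENNReal.ofReal (n * (M / B ^ (1 + γ))) := by
          rw [ENNReal.ofReal_mul hn.le, ENNReal.ofReal_natCast]
  calc μ {ω | ε < |(∑ i, Ys i ω) / n - ∫ ω, Y ω ∂μ|}
      ≤ μ ({ω | ∃ i, B < Ys i ω} ∪
          {ω | n * ε / 2 ≤ |∑ i, min (Ys i ω) B - n * ∫ ω, min (Y ω) B ∂μ|}) :=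
        measure_mono fun ω hω ↦ exists_lt_or_le_abs_sum_min_sub (fun i ↦ Ys i ω) B hbias' hω
    _ ≤ ENNReal.ofReal (n * (M / B ^ (1 + γ))) +
          ENNReal.ofReal (4 * B ^ (1 - γ) * M / (n * ε ^ 2)) :=
        (measure_union_le _ _).trans (add_le_add htail
          (measure_le_abs_sum_min_sub_le hY hY₀ (by linarith) hγ₁ hint hmom hind hident hB.le hε))
    _ = _ := (ENNReal.ofReal_add (by positivity) (by positivity)).symm

end Truncation

theorem empirical_abs_mean_concentration_general
    {Ω : Type*} [MeasureSpace Ω] [IsProbabilityMeasure (ℙ : Measure Ω)]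
    (γ M : ℝ) (hγ : γ ∈ Set.Ioo (0 : ℝ) 1) (hM : 1 < M)
    (X : Ω → ℝ) (hX : Measurable X)
    (hintmom : Integrable (fun ω => |X ω| ^ (1 + γ)) ℙ)
    (hmom : ∫ ω, |X ω| ^ (1 + γ) ≤ M)
    (N : ℕ) (Xs : Fin N → Ω → ℝ)
    (hindep : iIndepFun Xs ℙ)
    (hident : ∀ i, IdentDistrib (Xs i) X ℙ ℙ)
    (ε : ℝ) (hε : ε ∈ Set.Ioo (0 : ℝ) 1)
    (hN : (8 * M / ε) ^ ((1 : ℝ) / 2 + 1 / γ) ≤ (N : ℝ)) :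
    ℙ {ω | ε < abs ((∑ i, |Xs i ω|) / N - ∫ ω', |X ω'|)} ≤
      ENNReal.ofReal (8 * M / (ε ^ 2 * (N : ℝ) ^ (γ / 3))) := by
  obtain ⟨hγ₀, hγ₁⟩ := hγ
  obtain ⟨hε₀, hε₁⟩ := hε
  have hMε : 1 ≤ 8 * M / ε := by rw [le_div_iff₀ hε₀]; linarith
  have hN₁ : 1 ≤ (N : ℝ) := (Real.one_le_rpow hMε (by positivity)).trans hN
  have hNγ : 8 * M / ε ≤ (N : ℝ) ^ γ :=
    le_rpow_of_rpow_le_of_one_le_mul hMε hγ₀.le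
      (by rw [add_mul, one_div_mul_cancel hγ₀.ne']; linarith) hN
  have : Nonempty (Fin N) := ⟨⟨0, by exact_mod_cast hN₁⟩⟩
  have hbias : M / (N : ℝ) ^ γ ≤ ε / 2 := by
    rw [div_le_iff₀ hε₀] at hNγ
    rw [div_le_iff₀ (by positivity)]
    nlinarith
  have key := measure_lt_abs_sum_div_card_sub_integral_le (Y := fun ω ↦ |X ω|)
    (Ys := fun i ω ↦ |Xs i ω|) hX.abs.aemeasurable (fun ω ↦ abs_nonneg (X ω)) hγ₀.le hγ₁.le
    hintmom hmom (hindep.comp (fun _ ↦ abs) fun _ ↦ measurable_abs)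
    (fun i ↦ (hident i).comp measurable_abs) (by linarith : (0 : ℝ) < N) hε₀ hbias
  rw [Fintype.card_fin] at key
  refine key.trans (ENNReal.ofReal_le_ofReal ?_)
  have hγ3 : (N : ℝ) ^ (γ / 3) ≤ (N : ℝ) ^ γ :=
    Real.rpow_le_rpow_of_exponent_le hN₁ (by linarith)
  rw [Real.rpow_add (by positivity), Real.rpow_sub (by positivity), Real.rpow_one]
  calc (N : ℝ) * (M / (N * N ^ γ)) + 4 * (N / N ^ γ) * M / (N * ε ^ 2)
      = (ε ^ 2 + 4) * M / (ε ^ 2 * N ^ γ) := by field_simp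
    _ ≤ 8 * M / (ε ^ 2 * N ^ γ) := by gcongr; nlinarith
    _ ≤ 8 * M / (ε ^ 2 * (N : ℝ) ^ (γ / 3)) := by gcongr

/-- empirical estimation of `E|X|` for a symmetric random variable with bounded
`(1+γ)`-moment: if `N ≥ (8M/ε)^{1/2 + 1/γ}`, then
`P(|Ẽ_N|X| − E|X|| > ε) ≤ 8M/(ε² N^{γ/3})`. -/
theorem empirical_abs_mean_concentration
    {Ω : Type*} [MeasureSpace Ω] [IsProbabilityMeasure (ℙ : Measure Ω)]
    (γ M : ℝ) (hγ : γ ∈ Set.Ioo (0 : ℝ) 1) (hM : 1 < M)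
    (X : Ω → ℝ) (hX : Measurable X)
    (hsym : Measure.map X ℙ = Measure.map (fun ω => -X ω) ℙ)
    (hintmom : Integrable (fun ω => |X ω| ^ (1 + γ)) ℙ)
    (hmom : ∫ ω, |X ω| ^ (1 + γ) ≤ M)
    (N : ℕ) (Xs : Fin N → Ω → ℝ) (hXs : ∀ i, Measurable (Xs i))
    (hindep : iIndepFun Xs ℙ)
    (hident : ∀ i, IdentDistrib (Xs i) X ℙ ℙ)
    (ε : ℝ) (hε : ε ∈ Set.Ioo (0 : ℝ) 1)
    (hN : (8 * M / ε) ^ ((1 : ℝ) / 2 + 1 / γ) ≤ (N : ℝ)) :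
    ℙ {ω | ε < abs ((∑ i, |Xs i ω|) / N - ∫ ω', |X ω'|)} ≤
      ENNReal.ofReal (8 * M / (ε ^ 2 * (N : ℝ) ^ (γ / 3))) :=
  empirical_abs_mean_concentration_general γ M hγ hM X hX hintmom hmom N Xs hindep hident ε hε hN
end

section
/- Let U be a family of probability distributions on ℝⁿ each of which is a product distribution, and let Ū be the closure of U under pushforwards by invertible linear transformations. Let Q be a map assigning to each P ∈ Ū a probability distribution Q(P) on ℝⁿ such that: (1) for all P ∈ U, Q(P) is absolutely symmetric; (2) Q is linearly equivariant, i.e. Q(T·P) = T·Q(P) for every invertible linear T (where T·P denotes pushforward); (3) for every P ∈ Ū, the covariance matrix Cov(Q(P)) is positive definite. Then for any symmetric ICA model X = AS with the distribution P_S of S in U, the matrix Cov(Q(P_X))^{−1/2} is an orthogonalizer of X, i.e. (Cov(Q(P_X))^{−1/2} A)ᵀ (Cov(Q(P_X))^{−1/2} A) is diagonal with positive diagonal. -/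
open MeasureTheory Matrix
open scoped ENNReal

/-- The covariance matrix of a distribution `ν` on `ℝⁿ`. -/
noncomputable def covMatrixOfMeasure {n : ℕ} (ν : Measure (Fin n → ℝ)) :
    Matrix (Fin n) (Fin n) ℝ :=
  Matrix.of fun i j => ∫ x, (x i - ∫ y, y i ∂ν) * (x j - ∫ y, y j ∂ν) ∂ν

/-- A distribution on `ℝⁿ` is absolutely symmetric if it is invariant under independent sign
flips of each coordinate. -/
def AbsolutelySymmetricPi {n : ℕ} (ν : Measure (Fin n → ℝ)) : Prop :=
  ∀ ε : Fin n → ℝ, (∀ i, ε i = 1 ∨ ε i = -1) →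
    Measure.map (fun x i => ε i * x i) ν = ν

/-!
By equivariance `Q(P_X) = A·ν` with `ν = Q(P_S)` absolutely symmetric. Flipping the sign of one
coordinate kills the mixed moments of `ν`, so `Cov ν = D` is the diagonal matrix of second
moments, and `Cov(A·ν) = A D Aᵀ`. Hence `(BA)ᵀ(BA) = Aᵀ (A D Aᵀ)⁻¹ A = D⁻¹`, with `D` positive
because `Cov ν` is positive definite.
-/

lemma covMatrixOfMeasure_apply_of_integral_eq_zero {n : ℕ} {μ : Measure (Fin n → ℝ)}
    (hμ : ∀ i, ∫ x, x i ∂μ = 0) (i j : Fin n) :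
    covMatrixOfMeasure μ i j = ∫ x, x i * x j ∂μ := by
  simp only [covMatrixOfMeasure, of_apply, hμ, sub_zero]

namespace AbsolutelySymmetricPi

variable {n : ℕ} {ν : Measure (Fin n → ℝ)}

lemma integral_comp_signFlip (hν : AbsolutelySymmetricPi ν) {ε : Fin n → ℝ}
    (hε : ∀ i, ε i = 1 ∨ ε i = -1) {g : (Fin n → ℝ) → ℝ} (hg : AEStronglyMeasurable g ν) :
    ∫ x, g (fun i => ε i * x i) ∂ν = ∫ x, g x ∂ν := by
  have hflip : Measurable fun x : Fin n → ℝ => fun i => ε i * x i := by fun_prop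
  rw [← integral_map hflip.aemeasurable (by rwa [hν ε hε]), hν ε hε]

lemma integral_eq_zero_of_odd (hν : AbsolutelySymmetricPi ν) {g : (Fin n → ℝ) → ℝ}
    (hg : AEStronglyMeasurable g ν) (hodd : ∀ x, g (-x) = -g x) :
    ∫ x, g x ∂ν = 0 := by
  have h := hν.integral_comp_signFlip (ε := fun _ => -1) (fun _ => Or.inr rfl) hg
  simp only [neg_one_mul] at h
  rw [show (fun x : Fin n → ℝ => g fun i => -x i) = fun x => -g x from funext fun x => hodd x,
    integral_neg] at h
  linarith

lemma integral_mul_eq_zero (hν : AbsolutelySymmetricPi ν) {k l : Fin n} (hkl : k ≠ l) :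
    ∫ x, x k * x l ∂ν = 0 := by
  have h := hν.integral_comp_signFlip (ε := fun i => if i = k then -1 else 1)
    (fun i => by split_ifs <;> simp) (g := fun x => x k * x l) (by fun_prop)
  simp only [if_pos, if_neg hkl.symm, one_mul, neg_mul, integral_neg] at h
  linarith

lemma integral_apply_eq_zero (hν : AbsolutelySymmetricPi ν) (i : Fin n) : ∫ x, x i ∂ν = 0 :=
  hν.integral_eq_zero_of_odd (measurable_pi_apply i).aestronglyMeasurable fun _ => rfl

lemma integral_mulVec_apply_eq_zero (hν : AbsolutelySymmetricPi ν)
    (A : Matrix (Fin n) (Fin n) ℝ) (i : Fin n) :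
    ∫ x, (A *ᵥ x) i ∂ν = 0 :=
  hν.integral_eq_zero_of_odd (by fun_prop) fun x => by rw [mulVec_neg, Pi.neg_apply]

lemma covMatrixOfMeasure_eq_diagonal (hν : AbsolutelySymmetricPi ν) :
    covMatrixOfMeasure ν = diagonal fun k => ∫ x, x k ^ 2 ∂ν := by
  ext i j
  rw [covMatrixOfMeasure_apply_of_integral_eq_zero hν.integral_apply_eq_zero]
  rcases eq_or_ne i j with rfl | hij
  · simp [sq]
  · simp [hν.integral_mul_eq_zero hij, hij]

lemma integral_sq_pos_of_posDef (hν : AbsolutelySymmetricPi ν)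
    (hpos : (covMatrixOfMeasure ν).PosDef) (k : Fin n) :
    0 < ∫ x, x k ^ 2 ∂ν := by
  simpa [hν.covMatrixOfMeasure_eq_diagonal] using hpos.diag_pos (i := k)

/-- A non-integrable function has integral `0`, which positive definiteness rules out on the
diagonal. -/
lemma integrable_mul_of_posDef (hν : AbsolutelySymmetricPi ν)
    (hpos : (covMatrixOfMeasure ν).PosDef) (k l : Fin n) :
    Integrable (fun x => x k * x l) ν := by
  have hL2 : ∀ k, MemLp (fun x : Fin n → ℝ => x k) 2 ν := fun k =>
    (memLp_two_iff_integrable_sq (measurable_pi_apply k).aestronglyMeasurable).2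
      (.of_integral_ne_zero (hν.integral_sq_pos_of_posDef hpos k).ne')
  exact (hL2 k).integrable_mul (hL2 l)

lemma covMatrixOfMeasure_map_mulVec (hν : AbsolutelySymmetricPi ν)
    (hint : ∀ k l, Integrable (fun x => x k * x l) ν) (A : Matrix (Fin n) (Fin n) ℝ) :
    covMatrixOfMeasure (ν.map (A *ᵥ ·)) = A * covMatrixOfMeasure ν * Aᵀ := by
  have hA : Measurable (A *ᵥ ·) := by fun_prop
  ext i j
  rw [covMatrixOfMeasure_apply_of_integral_eq_zero fun i => by
    rw [integral_map hA.aemeasurable (measurable_pi_apply i).aestronglyMeasurable]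
    exact hν.integral_mulVec_apply_eq_zero A i,
    integral_map hA.aemeasurable (by fun_prop)]
  have hexpand : ∀ x : Fin n → ℝ,
      (A *ᵥ x) i * (A *ᵥ x) j = ∑ k, ∑ l, A i k * A j l * (x k * x l) := fun x => by
    simp only [mulVec, dotProduct, Finset.sum_mul_sum]
    exact Finset.sum_congr rfl fun k _ => Finset.sum_congr rfl fun l _ => by ring
  simp only [hexpand, mul_apply, transpose_apply,
    covMatrixOfMeasure_apply_of_integral_eq_zero hν.integral_apply_eq_zero, Finset.sum_mul]
  rw [integral_finsetSum _ fun k _ => integrable_finsetSum _ fun l _ =>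
    (hint k l).const_mul (A i k * A j l), Finset.sum_comm]
  refine Finset.sum_congr rfl fun k _ => ?_
  rw [integral_finsetSum _ fun l _ => (hint k l).const_mul (A i k * A j l)]
  simp only [integral_const_mul]
  exact Finset.sum_congr rfl fun l _ => by ring

end AbsolutelySymmetricPi

lemma Matrix.IsSymm.transpose_mul_mul_self_eq_inv {m R : Type*} [Fintype m] [DecidableEq m]
    [CommRing R] {A B M : Matrix m m R} (hB : B.IsSymm) (hA : IsUnit A)
    (hBB : B * B = (A * M * Aᵀ)⁻¹) :
    (B * A)ᵀ * (B * A) = M⁻¹ := by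
  have hA' : IsUnit A.det := (isUnit_iff_isUnit_det A).1 hA
  have hAt : IsUnit Aᵀ.det := by rwa [det_transpose]
  calc (B * A)ᵀ * (B * A) = Aᵀ * (B * B) * A := by
        rw [transpose_mul, hB.eq]; simp only [Matrix.mul_assoc]
    _ = M⁻¹ := by
        rw [hBB, Matrix.mul_inv_rev, Matrix.mul_inv_rev, ← Matrix.mul_assoc, mul_nonsing_inv _ hAt,
          Matrix.one_mul, Matrix.mul_assoc, nonsing_inv_mul _ hA', Matrix.mul_one]

theorem abstract_orthogonalizer_general
    {n : ℕ} (U : Set (Measure (Fin n → ℝ)))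
    (Q : Measure (Fin n → ℝ) → Measure (Fin n → ℝ)) :
    let Ubar : Set (Measure (Fin n → ℝ)) :=
      {ν | ∃ μ ∈ U, ∃ T : (Fin n → ℝ) ≃ₗ[ℝ] (Fin n → ℝ), ν = Measure.map (⇑T) μ}
    (∀ μ ∈ U, AbsolutelySymmetricPi (Q μ)) →
    (∀ μ ∈ Ubar, ∀ T : (Fin n → ℝ) ≃ₗ[ℝ] (Fin n → ℝ),
      Q (Measure.map (⇑T) μ) = Measure.map (⇑T) (Q μ)) →
    (∀ μ ∈ Ubar, (covMatrixOfMeasure (Q μ)).PosDef) →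
    ∀ νS ∈ U, AbsolutelySymmetricPi νS →
    ∀ A : Matrix (Fin n) (Fin n) ℝ, IsUnit A →
    ∀ B : Matrix (Fin n) (Fin n) ℝ, B.PosDef →
      B * B = (covMatrixOfMeasure (Q (Measure.map (A.mulVec) νS)))⁻¹ →
      ∃ d : Fin n → ℝ, (∀ i, 0 < d i) ∧ (B * A)ᵀ * (B * A) = Matrix.diagonal d := by
  intro Ubar hsymm hequiv hpos νS hνS _ A hA B hB hBB
  have hνS_mem : νS ∈ Ubar := ⟨νS, hνS, LinearEquiv.refl ℝ _, Measure.map_id.symm⟩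
  have hQX : Q (νS.map A.mulVec) = (Q νS).map A.mulVec := by
    have := hequiv νS hνS_mem (A.toLinearEquiv' hA.invertible)
    rwa [show ⇑(A.toLinearEquiv' hA.invertible) = A.mulVec from funext (toLin'_apply A)] at this
  have hsymmQ := hsymm νS hνS
  have hposQ := hpos νS hνS_mem
  set d : Fin n → ℝ := fun k => ∫ x, x k ^ 2 ∂Q νS
  have hd : ∀ k, 0 < d k := hsymmQ.integral_sq_pos_of_posDef hposQ
  rw [hQX, hsymmQ.covMatrixOfMeasure_map_mulVec (hsymmQ.integrable_mul_of_posDef hposQ),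
    hsymmQ.covMatrixOfMeasure_eq_diagonal] at hBB
  have hBsymm : B.IsSymm := isHermitian_iff_isSymm.1 hB.isHermitian
  refine ⟨d⁻¹, fun k => inv_pos.2 (hd k), ?_⟩
  rw [hBsymm.transpose_mul_mul_self_eq_inv hA hBB, inv_eq_left_inv]
  rw [diagonal_mul_diagonal, ← diagonal_one]
  exact congrArg diagonal (funext fun k => inv_mul_cancel₀ (hd k).ne')

/-- abstract orthogonalizer lemma.  Let `U` be a family of product distributions
on `ℝⁿ` and `Ū` its closure under pushforwards by invertible linear maps.  If `Q` maps each
`P ∈ Ū` to a distribution such that (1) `Q(P)` is absolutely symmetric for `P ∈ U`, (2) `Q` is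
linearly equivariant, and (3) `Cov(Q(P))` is positive definite for `P ∈ Ū`, then for any
symmetric ICA model `X = AS` with `P_S ∈ U`, the matrix `Cov(Q(P_X))^{−1/2}` (the positive
definite `B` with `B·B = Cov(Q(P_X))⁻¹`) is an orthogonalizer of `X`. -/
theorem abstract_orthogonalizer
    {n : ℕ} (U : Set (Measure (Fin n → ℝ)))
    (hU : ∀ μ ∈ U, IsProbabilityMeasure μ ∧
      ∃ μi : Fin n → Measure ℝ, (∀ i, IsProbabilityMeasure (μi i)) ∧ μ = Measure.pi μi)
    (Q : Measure (Fin n → ℝ) → Measure (Fin n → ℝ)) :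
    let Ubar : Set (Measure (Fin n → ℝ)) :=
      {ν | ∃ μ ∈ U, ∃ T : (Fin n → ℝ) ≃ₗ[ℝ] (Fin n → ℝ), ν = Measure.map (⇑T) μ}
    (∀ μ ∈ U, AbsolutelySymmetricPi (Q μ)) →
    (∀ μ ∈ Ubar, ∀ T : (Fin n → ℝ) ≃ₗ[ℝ] (Fin n → ℝ),
      Q (Measure.map (⇑T) μ) = Measure.map (⇑T) (Q μ)) →
    (∀ μ ∈ Ubar, (covMatrixOfMeasure (Q μ)).PosDef) →
    ∀ νS ∈ U, AbsolutelySymmetricPi νS →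
    ∀ A : Matrix (Fin n) (Fin n) ℝ, IsUnit A →
    ∀ B : Matrix (Fin n) (Fin n) ℝ, B.PosDef →
      B * B = (covMatrixOfMeasure (Q (Measure.map (A.mulVec) νS)))⁻¹ →
      ∃ d : Fin n → ℝ, (∀ i, 0 < d i) ∧ (B * A)ᵀ * (B * A) = Matrix.diagonal d :=
  abstract_orthogonalizer_general U Q
end

section
/- Let S = (S₁,…,Sₙ) be an absolutely symmetric random vector with E|Sᵢ| = 1 and E(|Sᵢ|^{1+γ}) ≤ M < ∞ for all i, where M > 1 and γ ∈ (0,1). Let S⁽¹⁾,…,S⁽ᴺ⁾ be i.i.d. copies of S and let Y be a random vector uniformly distributed on {S⁽¹⁾,…,S⁽ᴺ⁾}. For ε', δ' ∈ (0,1), if N ≥ (16 M n⁴ / ((ε')² δ'))^{1/2 + 3/γ}, then with probability at least 1 − δ' over the sample, (1 − ε') B₁ⁿ ⊆ ΓY. -/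
/-!
For `u` with `|uᵢ|` maximal, testing `E|⟨u, Y⟩|` against the signs `sign(uᵢ) sign(Yᵢ)` gives
`h_{ΓY}(u) ≥ |uᵢ| (1 - ∑ⱼ |Aᵢⱼ - δᵢⱼ|)` for the sample matrix
`Aᵢⱼ = (1/N) ∑ₖ sign(S⁽ᵏ⁾ᵢ) S⁽ᵏ⁾ⱼ`, so `(1 - ε') B₁ⁿ ⊆ ΓY` once every entry of `A - I` is at most
`ε'/n`. Absolute symmetry gives `E[sign(Sᵢ) Sⱼ] = δᵢⱼ`; each entry then obeys a quantitative weak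
law of large numbers under the `(1+γ)`-moment bound (truncate, then Chebyshev and Markov), and a
union bound over the `n²` entries concludes.
-/

open MeasureTheory ProbabilityTheory
open scoped RealInnerProductSpace ENNReal Pointwise

/-- The empirical (uniform) distribution of a finite tuple of points of `ℝⁿ`. -/
noncomputable def empiricalMeasure {n N : ℕ} (x : Fin N → EuclideanSpace ℝ (Fin n)) :
    Measure (EuclideanSpace ℝ (Fin n)) :=
  (N : ℝ≥0∞)⁻¹ • ∑ i, Measure.dirac (x i)

/-- A distribution on `ℝⁿ` is absolutely symmetric if it is invariant under independent sign
flips of each coordinate. -/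
def AbsolutelySymmetric {n : ℕ} (μ : Measure (EuclideanSpace ℝ (Fin n))) : Prop :=
  ∀ ε : Fin n → ℝ, (∀ i, ε i = 1 ∨ ε i = -1) →
    Measure.map (fun x : EuclideanSpace ℝ (Fin n) =>
      (EuclideanSpace.equiv (Fin n) ℝ).symm fun i => ε i * x i) μ = μ

lemma Real.sign_mul_self (r : ℝ) : Real.sign r * r = |r| := by
  rcases lt_trichotomy r 0 with h | rfl | h
  · rw [Real.sign_of_neg h, abs_of_neg h]; ring
  · simp
  · rw [Real.sign_of_pos h, abs_of_pos h]; ring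

lemma Real.abs_sign_le_one (r : ℝ) : |Real.sign r| ≤ 1 := by
  rcases Real.sign_apply_eq r with h | h | h <;> simp [h]

lemma Real.abs_sign_mul_le (r s : ℝ) : |Real.sign r * s| ≤ |s| := by
  rw [abs_mul]
  exact mul_le_of_le_one_left (abs_nonneg s) (Real.abs_sign_le_one r)

lemma Real.measurable_sign : Measurable Real.sign :=
  Measurable.ite measurableSet_Iio measurable_const
    (Measurable.ite measurableSet_Ioi measurable_const measurable_const)

namespace EuclideanSpace

variable {n : ℕ}

lemma inner_eq_sum_mul (x u : EuclideanSpace ℝ (Fin n)) : ⟪x, u⟫ = ∑ j, x j * u j := by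
  simp [PiLp.inner_apply, mul_comm]

lemma inner_le_of_sum_abs_le_one {y u : EuclideanSpace ℝ (Fin n)} {i : Fin n}
    (hy : ∑ j, |y j| ≤ 1) (hi : ∀ j, |u j| ≤ |u i|) : ⟪y, u⟫ ≤ |u i| :=
  calc ⟪y, u⟫ = ∑ j, y j * u j := inner_eq_sum_mul y u
    _ ≤ ∑ j, |y j| * |u i| := Finset.sum_le_sum fun j _ =>
        (le_abs_self _).trans (abs_mul (y j) (u j) ▸
          mul_le_mul_of_nonneg_left (hi j) (abs_nonneg _))
    _ = (∑ j, |y j|) * |u i| := (Finset.sum_mul ..).symm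
    _ ≤ |u i| := mul_le_of_le_one_left (abs_nonneg _) hy

lemma measurable_sign_apply_mul_apply (i j : Fin n) :
    Measurable fun x : EuclideanSpace ℝ (Fin n) => Real.sign (x i) * x j :=
  (Real.measurable_sign.comp (by fun_prop)).mul (by fun_prop)

end EuclideanSpace

open EuclideanSpace

lemma smul_l1Ball_subset_centroidBody {n : ℕ} {μ : Measure (EuclideanSpace ℝ (Fin n))} {c : ℝ}
    (hc : 0 ≤ c)
    (h : ∀ (u : EuclideanSpace ℝ (Fin n)) (i : Fin n), (∀ j, |u j| ≤ |u i|) →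
      c * |u i| ≤ ∫ x, |⟪x, u⟫| ∂μ) :
    c • {x : EuclideanSpace ℝ (Fin n) | ∑ i, |x i| ≤ 1} ⊆ centroidBody μ := by
  rintro _ ⟨y, hy, rfl⟩ u
  rcases isEmpty_or_nonempty (Fin n) with hn | hn
  · simp [inner_eq_sum_mul]
  obtain ⟨i, -, hi⟩ := Finset.univ.exists_max_image (fun j => |u j|) Finset.univ_nonempty
  rw [real_inner_smul_left]
  exact (mul_le_mul_of_nonneg_left (inner_le_of_sum_abs_le_one hy fun j => hi j
    (Finset.mem_univ j)) hc).trans (h u i fun j => hi j (Finset.mem_univ j))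

lemma integral_empiricalMeasure {n N : ℕ} (x : Fin N → EuclideanSpace ℝ (Fin n))
    (f : EuclideanSpace ℝ (Fin n) → ℝ) :
    ∫ y, f y ∂(empiricalMeasure x) = (N : ℝ)⁻¹ * ∑ k, f (x k) := by
  rw [empiricalMeasure, integral_smul_measure,
    integral_finsetSum_measure fun k _ => integrable_dirac (by simp)]
  simp [integral_dirac]

noncomputable def signCorr {n N : ℕ} (x : Fin N → EuclideanSpace ℝ (Fin n)) :
    Matrix (Fin n) (Fin n) ℝ :=
  Matrix.of fun i j => (N : ℝ)⁻¹ * ∑ k, Real.sign (x k i) * x k j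

lemma signCorr_mulVec_eq {n N : ℕ} (x : Fin N → EuclideanSpace ℝ (Fin n))
    (u : EuclideanSpace ℝ (Fin n)) (i : Fin n) :
    (N : ℝ)⁻¹ * ∑ k, Real.sign (x k i) * ⟪x k, u⟫ = ∑ j, signCorr x i j * u j := by
  simp only [signCorr, Matrix.of_apply, inner_eq_sum_mul, Finset.mul_sum, Finset.sum_mul]
  rw [Finset.sum_comm]
  exact Finset.sum_congr rfl fun j _ => Finset.sum_congr rfl fun k _ => by ring

/-- Testing against the signs `sign(uᵢ) sign(xₖᵢ)` at a coordinate where `|uᵢ|` is maximal. -/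
lemma mul_one_sub_le_mean_abs_inner {n N : ℕ} (x : Fin N → EuclideanSpace ℝ (Fin n))
    {u : EuclideanSpace ℝ (Fin n)} {i : Fin n} (hi : ∀ j, |u j| ≤ |u i|) :
    |u i| * (1 - ∑ j, |(signCorr x - 1) i j|) ≤ (N : ℝ)⁻¹ * ∑ k, |⟪x k, u⟫| := by
  set s := Real.sign (u i)
  have hdev : -(|u i| * ∑ j, |(signCorr x - 1) i j|) ≤ ∑ j, s * u j * (signCorr x - 1) i j := by
    rw [Finset.mul_sum, ← Finset.sum_neg_distrib]
    refine Finset.sum_le_sum fun j _ => neg_le_of_abs_le ?_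
    rw [abs_mul]
    exact mul_le_mul_of_nonneg_right ((Real.abs_sign_mul_le (u i) (u j)).trans (hi j))
      (abs_nonneg _)
  have hdiag : ∑ j, s * u j * (1 : Matrix (Fin n) (Fin n) ℝ) i j = |u i| := by
    simp [Matrix.one_apply, s, Real.sign_mul_self]
  calc |u i| * (1 - ∑ j, |(signCorr x - 1) i j|)
      ≤ ∑ j, s * u j * signCorr x i j := by
        have hsplit : ∑ j, s * u j * signCorr x i j
            = ∑ j, s * u j * (1 : Matrix (Fin n) (Fin n) ℝ) i j
              + ∑ j, s * u j * (signCorr x - 1) i j := by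
          rw [← Finset.sum_add_distrib]
          exact Finset.sum_congr rfl fun j _ => by simp only [Matrix.sub_apply]; ring
        rw [hsplit, hdiag]
        linarith
    _ = (N : ℝ)⁻¹ * ∑ k, s * (Real.sign (x k i) * ⟪x k, u⟫) := by
        rw [← Finset.mul_sum, mul_left_comm, signCorr_mulVec_eq, Finset.mul_sum]
        exact Finset.sum_congr rfl fun j _ => by ring
    _ ≤ (N : ℝ)⁻¹ * ∑ k, |⟪x k, u⟫| := by
        gcongr with k
        exact (le_abs_self _).trans ((Real.abs_sign_mul_le _ _).trans
          (Real.abs_sign_mul_le _ _))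

lemma smul_l1Ball_subset_centroidBody_empiricalMeasure {n N : ℕ}
    (x : Fin N → EuclideanSpace ℝ (Fin n)) {ε : ℝ} (hε : ε ≤ 1)
    (h : ∀ i, ∑ j, |(signCorr x - 1) i j| ≤ ε) :
    (1 - ε) • {y : EuclideanSpace ℝ (Fin n) | ∑ i, |y i| ≤ 1} ⊆
      centroidBody (empiricalMeasure x) := by
  refine smul_l1Ball_subset_centroidBody (sub_nonneg.2 hε) fun u i hi => ?_
  rw [integral_empiricalMeasure]
  calc (1 - ε) * |u i| ≤ |u i| * (1 - ∑ j, |(signCorr x - 1) i j|) := by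
        rw [mul_comm]; gcongr; exact h i
    _ ≤ _ := mul_one_sub_le_mean_abs_inner x hi

/-- Flipping the sign of the `i`-th coordinate negates `sign(xᵢ) xⱼ` for `j ≠ i`. -/
lemma AbsolutelySymmetric.integral_sign_mul_eq_zero {n : ℕ}
    {μ : Measure (EuclideanSpace ℝ (Fin n))} (hμ : AbsolutelySymmetric μ) {i j : Fin n}
    (hij : i ≠ j) : ∫ x, Real.sign (x i) * x j ∂μ = 0 := by
  classical
  set ε : Fin n → ℝ := fun l => if l = i then -1 else 1
  set flip : EuclideanSpace ℝ (Fin n) → EuclideanSpace ℝ (Fin n) :=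
    fun x => (EuclideanSpace.equiv (Fin n) ℝ).symm fun l => ε l * x l
  have hflip : Measurable flip := by fun_prop
  have hinv : μ.map flip = μ := hμ ε fun l => by by_cases h : l = i <;> simp [ε, h]
  have hneg : ∀ x, Real.sign (flip x i) * flip x j = -(Real.sign (x i) * x j) := fun x => by
    simp [flip, ε, hij.symm, Real.sign_neg]
  have := integral_map (μ := μ) (f := fun x => Real.sign (x i) * x j) hflip.aemeasurable
    ((measurable_sign_apply_mul_apply i j).aestronglyMeasurable)
  rw [hinv] at this
  simp only [hneg, integral_neg] at this
  linarith

namespace ProbabilityTheory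

variable {α : Type*} {R γ : ℝ}

lemma abs_sub_truncation_le (f : α → ℝ) (hR : 0 < R) (hγ : 0 ≤ γ) (x : α) :
    |f x - truncation f R x| ≤ |f x| ^ (1 + γ) / R ^ γ := by
  by_cases hx : f x ∈ Set.Ioc (-R) R
  · simp [truncation, hx, Set.indicator_of_mem]
    positivity
  have hRx : R ≤ |f x| := by
    simp only [Set.mem_Ioc, not_and_or, not_lt, not_le] at hx
    rcases hx with hx | hx
    · rw [abs_of_neg (by linarith)]; linarith
    · rw [abs_of_pos (by linarith)]; exact hx.le
  have hfx : 0 < |f x| := hR.trans_le hRx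
  rw [truncation, Function.comp_apply, Set.indicator_of_notMem hx, sub_zero,
    le_div_iff₀ (Real.rpow_pos_of_pos hR γ), Real.rpow_add hfx, Real.rpow_one]
  gcongr

lemma truncation_sq_le (f : α → ℝ) (hR : 0 < R) (hγ0 : 0 ≤ γ) (hγ1 : γ ≤ 1) (x : α) :
    truncation f R x ^ 2 ≤ R ^ (1 - γ) * |f x| ^ (1 + γ) := by
  have hsplit : truncation f R x ^ 2
      = |truncation f R x| ^ (1 - γ) * |truncation f R x| ^ (1 + γ) := by
    rw [← Real.rpow_add' (abs_nonneg _) (by ring_nf; norm_num), show 1 - γ + (1 + γ) = (2 : ℝ)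
      by ring, Real.rpow_two, sq_abs]
  have hbound : |truncation f R x| ≤ R :=
    (abs_truncation_le_bound f R x).trans_eq (abs_of_pos hR)
  rw [hsplit]
  exact mul_le_mul (Real.rpow_le_rpow (abs_nonneg _) hbound (by linarith : 0 ≤ 1 - γ))
    (Real.rpow_le_rpow (abs_nonneg _) (abs_truncation_le_abs_self f R x)
      (by linarith : 0 ≤ 1 + γ)) (by positivity) (by positivity)

variable {Ω : Type*} [MeasurableSpace Ω] {μ : Measure Ω} {X : Ω → ℝ} {M : ℝ}

lemma integral_abs_sub_truncation_le [IsFiniteMeasure μ] (hX : Integrable X μ)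
    (hmomint : Integrable (fun ω => |X ω| ^ (1 + γ)) μ) (hmom : ∫ ω, |X ω| ^ (1 + γ) ∂μ ≤ M)
    (hR : 0 < R) (hγ : 0 ≤ γ) :
    ∫ ω, |X ω - truncation X R ω| ∂μ ≤ M / R ^ γ :=
  calc ∫ ω, |X ω - truncation X R ω| ∂μ ≤ ∫ ω, |X ω| ^ (1 + γ) / R ^ γ ∂μ :=
        integral_mono (hX.sub hX.1.integrable_truncation).abs (hmomint.div_const _)
          (abs_sub_truncation_le X hR hγ)
    _ ≤ M / R ^ γ := by
        rw [integral_div]; gcongr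

lemma variance_truncation_le [IsProbabilityMeasure μ] (hX : AEStronglyMeasurable X μ)
    (hmomint : Integrable (fun ω => |X ω| ^ (1 + γ)) μ) (hmom : ∫ ω, |X ω| ^ (1 + γ) ∂μ ≤ M)
    (hR : 0 < R) (hγ0 : 0 ≤ γ) (hγ1 : γ ≤ 1) : variance (truncation X R) μ ≤ R ^ (1 - γ) * M :=
  calc variance (truncation X R) μ ≤ ∫ ω, truncation X R ω ^ 2 ∂μ :=
        variance_le_expectation_sq hX.truncation
    _ ≤ ∫ ω, R ^ (1 - γ) * |X ω| ^ (1 + γ) ∂μ :=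
        integral_mono (hX.memLp_truncation (p := 2)).integrable_sq (hmomint.const_mul _)
          (truncation_sq_le X hR hγ0 hγ1)
    _ ≤ R ^ (1 - γ) * M := by
        rw [integral_const_mul]; gcongr

lemma measure_ge_le_ofReal_integral_div [IsFiniteMeasure μ] (hX : 0 ≤ᵐ[μ] X)
    (hXint : Integrable X μ) {c : ℝ} (hc : 0 < c) :
    μ {ω | c ≤ X ω} ≤ ENNReal.ofReal ((∫ ω, X ω ∂μ) / c) := by
  rw [← ofReal_measureReal]
  refine ENNReal.ofReal_le_ofReal ?_
  rw [le_div_iff₀ hc, mul_comm]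
  exact mul_meas_ge_le_integral_of_nonneg hX hXint c

lemma le_abs_sum_sub_or_le_sum_abs_sub {N : ℕ} (hN : (0 : ℝ) < N) (z w : Fin N → ℝ)
    {m m' t : ℝ} (hbias : |m - m'| ≤ t / 4) (h : t < |(N : ℝ)⁻¹ * ∑ k, z k - m|) :
    N * t / 2 ≤ |∑ k, w k - N * m'| ∨ N * t / 4 ≤ ∑ k, |z k - w k| := by
  by_contra! hsmall
  have hdecomp : (N : ℝ)⁻¹ * ∑ k, z k - m
      = (N : ℝ)⁻¹ * (∑ k, w k - N * m') + (N : ℝ)⁻¹ * ∑ k, (z k - w k) - (m - m') := by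
    rw [Finset.sum_sub_distrib]
    field_simp
    ring
  have h1 : (N : ℝ)⁻¹ * |∑ k, w k - N * m'| < t / 2 := by
    rw [inv_mul_lt_iff₀ hN]; linarith [hsmall.1]
  have h2 : (N : ℝ)⁻¹ * |∑ k, (z k - w k)| < t / 4 := by
    rw [inv_mul_lt_iff₀ hN]
    linarith [(Finset.abs_sum_le_sum_abs (fun k => z k - w k) Finset.univ).trans_lt hsmall.2]
  rw [hdecomp] at h
  have h3 := abs_sub ((N : ℝ)⁻¹ * (∑ k, w k - N * m') + (N : ℝ)⁻¹ * ∑ k, (z k - w k)) (m - m')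
  have h4 := abs_add_le ((N : ℝ)⁻¹ * (∑ k, w k - N * m')) ((N : ℝ)⁻¹ * ∑ k, (z k - w k))
  rw [abs_mul, abs_mul, abs_inv, Nat.abs_cast] at h4
  linarith

variable [IsProbabilityMeasure μ] {N : ℕ} {Z : Fin N → Ω → ℝ} {Z₀ : Ω → ℝ} {t : ℝ}

lemma measure_abs_sum_truncation_sub_ge_le (hN : 0 < N)
    (hindep : Pairwise fun k l => IndepFun (Z k) (Z l) μ) (hid : ∀ k, IdentDistrib (Z k) Z₀ μ μ)
    (hmomint : Integrable (fun ω => |Z₀ ω| ^ (1 + γ)) μ) (hmom : ∫ ω, |Z₀ ω| ^ (1 + γ) ∂μ ≤ M)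
    (hR : 0 < R) (hγ0 : 0 ≤ γ) (hγ1 : γ ≤ 1) (ht : 0 < t) :
    μ {ω | N * t / 2 ≤ |∑ k, truncation (Z k) R ω - N * ∫ ω, truncation Z₀ R ω ∂μ|}
      ≤ ENNReal.ofReal (4 * M * R ^ (1 - γ) / (N * t ^ 2)) := by
  have hmem : ∀ k, MemLp (truncation (Z k) R) 2 μ := fun k =>
    (hid k).aemeasurable_fst.aestronglyMeasurable.memLp_truncation
  have hmean : μ[∑ k, truncation (Z k) R] = N * ∫ ω, truncation Z₀ R ω ∂μ := by
    rw [Finset.sum_fn, integral_finsetSum _ fun k _ => (hmem k).integrable one_le_two,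
      Finset.sum_congr rfl fun k _ => (hid k).truncation.integral_eq]
    simp
  have hvar : variance (∑ k, truncation (Z k) R) μ ≤ N * (R ^ (1 - γ) * M) := by
    have hind : Measurable (Set.indicator (Set.Ioc (-R) R) (id : ℝ → ℝ)) :=
      measurable_id.indicator measurableSet_Ioc
    rw [IndepFun.variance_sum (fun k _ => hmem k) fun k _ l _ hkl => (hindep hkl).comp hind hind]
    rw [Finset.sum_congr rfl fun k _ => (hid k).truncation.variance_eq]
    simp only [Finset.sum_const, Finset.card_univ, Fintype.card_fin, nsmul_eq_mul]
    gcongr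
    exact variance_truncation_le (hid ⟨0, hN⟩).aemeasurable_snd.aestronglyMeasurable hmomint
      hmom hR hγ0 hγ1
  have hNt : (0 : ℝ) < N * t / 2 := by positivity
  have hcheb := meas_ge_le_variance_div_sq (memLp_finsetSum' Finset.univ fun k _ => hmem k) hNt
  rw [hmean] at hcheb
  simp only [Finset.sum_apply] at hcheb
  refine hcheb.trans (ENNReal.ofReal_le_ofReal ?_)
  calc variance (∑ k, truncation (Z k) R) μ / (N * t / 2) ^ 2
      ≤ N * (R ^ (1 - γ) * M) / (N * t / 2) ^ 2 := by gcongr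
    _ = 4 * M * R ^ (1 - γ) / (N * t ^ 2) := by
        field_simp
        ring

lemma measure_sum_abs_sub_truncation_ge_le (hid : ∀ k, IdentDistrib (Z k) Z₀ μ μ)
    (hint : Integrable Z₀ μ) (hmomint : Integrable (fun ω => |Z₀ ω| ^ (1 + γ)) μ)
    (hmom : ∫ ω, |Z₀ ω| ^ (1 + γ) ∂μ ≤ M) (hR : 0 < R) (hγ : 0 ≤ γ) {c : ℝ} (hc : 0 < c) :
    μ {ω | c ≤ ∑ k, |Z k ω - truncation (Z k) R ω|} ≤ ENNReal.ofReal (N * (M / R ^ γ) / c) := by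
  have hint_k : ∀ k, Integrable (fun ω => |Z k ω - truncation (Z k) R ω|) μ := fun k =>
    have hZk := (hid k).integrable_iff.2 hint
    (hZk.sub hZk.1.integrable_truncation).abs
  have hsum : ∫ ω, ∑ k, |Z k ω - truncation (Z k) R ω| ∂μ
      = N * ∫ ω, |Z₀ ω - truncation Z₀ R ω| ∂μ := by
    have hu : Measurable fun z : ℝ => |z - Set.indicator (Set.Ioc (-R) R) id z| :=
      (measurable_id.sub (measurable_id.indicator measurableSet_Ioc)).abs
    have hk : ∀ k, ∫ ω, |Z k ω - truncation (Z k) R ω| ∂μ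
        = ∫ ω, |Z₀ ω - truncation Z₀ R ω| ∂μ := fun k => ((hid k).comp hu).integral_eq
    rw [integral_finsetSum _ fun k _ => hint_k k, Finset.sum_congr rfl fun k _ => hk k]
    simp
  refine (measure_ge_le_ofReal_integral_div
    (Filter.Eventually.of_forall fun ω => by positivity)
    (integrable_finsetSum _ fun k _ => hint_k k) hc).trans (ENNReal.ofReal_le_ofReal ?_)
  rw [hsum]
  gcongr
  exact integral_abs_sub_truncation_le hint hmomint hmom hR hγ

/-- Truncation at level `R`: Chebyshev for the truncated sum, Markov for the tails. -/
theorem measure_lt_abs_mean_sub_le (hN : 0 < N)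
    (hindep : Pairwise fun k l => IndepFun (Z k) (Z l) μ) (hid : ∀ k, IdentDistrib (Z k) Z₀ μ μ)
    (hint : Integrable Z₀ μ) (hmomint : Integrable (fun ω => |Z₀ ω| ^ (1 + γ)) μ)
    (hmom : ∫ ω, |Z₀ ω| ^ (1 + γ) ∂μ ≤ M) (hγ0 : 0 ≤ γ) (hγ1 : γ ≤ 1) (hR : 0 < R) (ht : 0 < t)
    (hRt : 4 * M ≤ R ^ γ * t) :
    μ {ω | t < |(N : ℝ)⁻¹ * ∑ k, Z k ω - ∫ ω, Z₀ ω ∂μ|}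
      ≤ ENNReal.ofReal (4 * M * R ^ (1 - γ) / (N * t ^ 2) + 4 * M / (R ^ γ * t)) := by
  have hNpos : (0 : ℝ) < N := Nat.cast_pos.2 hN
  have hRγ : 0 < R ^ γ := Real.rpow_pos_of_pos hR γ
  have hM : 0 ≤ M := le_trans (integral_nonneg fun ω => by positivity) hmom
  set m' := ∫ ω, truncation Z₀ R ω ∂μ
  have hbias : |∫ ω, Z₀ ω ∂μ - m'| ≤ t / 4 :=
    calc |∫ ω, Z₀ ω ∂μ - m'| = |∫ ω, (Z₀ ω - truncation Z₀ R ω) ∂μ| := by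
          rw [integral_sub hint hint.1.integrable_truncation]
      _ ≤ ∫ ω, |Z₀ ω - truncation Z₀ R ω| ∂μ := abs_integral_le_integral_abs
      _ ≤ M / R ^ γ := integral_abs_sub_truncation_le hint hmomint hmom hR hγ0
      _ ≤ t / 4 := by rw [div_le_iff₀ hRγ]; linarith
  have hsplit : {ω | t < |(N : ℝ)⁻¹ * ∑ k, Z k ω - ∫ ω, Z₀ ω ∂μ|} ⊆
      {ω | N * t / 2 ≤ |∑ k, truncation (Z k) R ω - N * m'|} ∪
        {ω | N * t / 4 ≤ ∑ k, |Z k ω - truncation (Z k) R ω|} := fun ω hω =>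
    le_abs_sum_sub_or_le_sum_abs_sub hNpos _ _ hbias hω
  calc _ ≤ _ := measure_mono hsplit
    _ ≤ _ := measure_union_le _ _
    _ ≤ ENNReal.ofReal (4 * M * R ^ (1 - γ) / (N * t ^ 2))
          + ENNReal.ofReal (4 * M / (R ^ γ * t)) := by
        gcongr
        · exact measure_abs_sum_truncation_sub_ge_le hN hindep hid hmomint hmom hR hγ0 hγ1 ht
        · refine (measure_sum_abs_sub_truncation_ge_le hid hint hmomint hmom hR hγ0
            (by positivity)).trans_eq ?_
          congr 1
          field_simp
    _ = _ := (ENNReal.ofReal_add (by positivity) (by positivity)).symm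

end ProbabilityTheory

lemma one_sub_le_measure_of_forall_notMem {Ω ι : Type*} [MeasurableSpace Ω] [Fintype ι]
    {μ : Measure Ω} [IsProbabilityMeasure μ] {G : Set Ω} {B : ι → Set Ω} {p : ℝ≥0∞}
    (hB : ∀ i, μ (B i) ≤ p / Fintype.card ι) (hG : ∀ ω, (∀ i, ω ∉ B i) → ω ∈ G) :
    1 - p ≤ μ G := by
  have hcover : Set.univ ⊆ G ∪ ⋃ i, B i := fun ω _ => by
    by_cases h : ∃ i, ω ∈ B i
    · exact Or.inr (Set.mem_iUnion.2 h)
    · exact Or.inl (hG ω fun i hi => h ⟨i, hi⟩)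
  have hunion : μ (⋃ i, B i) ≤ p :=
    calc μ (⋃ i, B i) ≤ ∑ i, μ (B i) := measure_iUnion_fintype_le μ B
      _ ≤ ∑ _i : ι, p / Fintype.card ι := Finset.sum_le_sum fun i _ => hB i
      _ ≤ p := by simpa using ENNReal.mul_div_le
  rw [tsub_le_iff_right]
  calc 1 = μ Set.univ := measure_univ.symm
    _ ≤ μ G + μ (⋃ i, B i) := (measure_mono hcover).trans (measure_union_le _ _)
    _ ≤ μ G + p := by gcongr

/-- The truncation level `R = K^{1/γ}`, `K = 16Mn⁴/(ε²δ)`, together with the accuracy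
`t = ε/n`, makes each of the `n²` deviation probabilities at most `δ/n²`. -/
lemma exists_truncation_level {γ M ε δ : ℝ} {n N : ℕ} (hγ : 0 < γ) (hM : 1 < M)
    (hε0 : 0 < ε) (hε1 : ε < 1) (hδ0 : 0 < δ) (hδ1 : δ < 1) (hn : 0 < n)
    (hN : (16 * M * (n : ℝ) ^ 4 / (ε ^ 2 * δ)) ^ ((1 : ℝ) / 2 + 3 / γ) ≤ N) :
    ∃ R : ℝ, 0 < R ∧ R ≤ N ∧ 4 * M ≤ R ^ γ * (ε / n) ∧
      4 * M * R ^ (1 - γ) / (N * (ε / n) ^ 2) + 4 * M / (R ^ γ * (ε / n)) ≤ δ / n ^ 2 := by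
  have hn1 : (1 : ℝ) ≤ n := Nat.one_le_cast.2 hn
  set K := 16 * M * (n : ℝ) ^ 4 / (ε ^ 2 * δ) with hKdef
  have hK : 1 ≤ K := by
    rw [le_div_iff₀ (by positivity), one_mul]
    have : ε ^ 2 * δ ≤ 1 := by nlinarith
    nlinarith [one_le_pow₀ (n := 4) hn1]
  have hK0 : 0 < K := one_pos.trans_le hK
  set R := K ^ γ⁻¹
  have hR0 : 0 < R := Real.rpow_pos_of_pos hK0 _
  have hRγ : R ^ γ = K := Real.rpow_inv_rpow hK0.le hγ.ne'
  have hRN : R ≤ N := by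
    refine le_trans (Real.rpow_le_rpow_of_exponent_le hK ?_) hN
    rw [← one_div]
    have : 1 / γ ≤ 3 / γ := by gcongr; norm_num
    linarith
  refine ⟨R, hR0, hRN, ?_⟩
  have hNpos : (0 : ℝ) < N := hR0.trans_le hRN
  have hKt : K * (ε / n) = 16 * M * n ^ 3 / (ε * δ) := by rw [hKdef]; field_simp
  have hKt2 : K * (ε / n) ^ 2 = 16 * M * n ^ 2 / δ := by rw [hKdef]; field_simp
  have hεδ : ε * δ < 1 := by nlinarith
  have hn3 : (1 : ℝ) ≤ n ^ 3 := one_le_pow₀ hn1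
  rw [hRγ]
  refine ⟨?_, ?_⟩
  · rw [hKt, le_div_iff₀ (by positivity)]
    nlinarith
  have hcheb : 4 * M * R ^ (1 - γ) / (N * (ε / n) ^ 2) ≤ δ / (4 * n ^ 2) :=
    calc 4 * M * R ^ (1 - γ) / (N * (ε / n) ^ 2) = 4 * M / (K * (ε / n) ^ 2) * (R / N) := by
          rw [Real.rpow_sub hR0, Real.rpow_one, hRγ]
          field_simp
      _ ≤ 4 * M / (K * (ε / n) ^ 2) * 1 := by
          gcongr
          exact div_le_one_of_le₀ hRN hNpos.le
      _ = δ / (4 * n ^ 2) := by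
          rw [mul_one, hKt2]
          field_simp
          ring
  have hmarkov : 4 * M / (K * (ε / n)) ≤ δ / (4 * n ^ 2) := by
    rw [hKt, div_div_eq_mul_div, div_le_div_iff₀ (by positivity) (by positivity)]
    have hεn : ε * n ^ 2 ≤ n ^ 3 := by nlinarith
    nlinarith [mul_le_mul_of_nonneg_left hεn (by positivity : (0 : ℝ) ≤ 16 * M * δ)]
  have : δ / (4 * n ^ 2) = δ / n ^ 2 / 4 := by ring
  linarith [div_nonneg hδ0.le (by positivity : (0 : ℝ) ≤ n ^ 2)]

section SampleSignCorrelation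

variable {n N : ℕ} {Ω : Type*} [MeasurableSpace Ω] {μ : Measure Ω}
  {S : Ω → EuclideanSpace ℝ (Fin n)} {Sk : Fin N → Ω → EuclideanSpace ℝ (Fin n)}

lemma integral_sign_mul_eq_one_apply (hS : Measurable S)
    (habs : AbsolutelySymmetric (μ.map S)) (hnorm : ∀ i, ∫ ω, |S ω i| ∂μ = 1) (i j : Fin n) :
    ∫ ω, Real.sign (S ω i) * S ω j ∂μ = (1 : Matrix (Fin n) (Fin n) ℝ) i j := by
  by_cases hij : i = j
  · subst hij
    simp [Real.sign_mul_self, hnorm]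
  · rw [Matrix.one_apply_ne hij, ← habs.integral_sign_mul_eq_zero hij,
      integral_map hS.aemeasurable (measurable_sign_apply_mul_apply i j).aestronglyMeasurable]

lemma measure_lt_abs_signCorr_sub_one_le [IsProbabilityMeasure μ] {γ M R t : ℝ} (hS : Measurable S)
    (habs : AbsolutelySymmetric (μ.map S)) (hint : ∀ i, Integrable (fun ω => |S ω i|) μ)
    (hnorm : ∀ i, ∫ ω, |S ω i| ∂μ = 1)
    (hintmom : ∀ i, Integrable (fun ω => |S ω i| ^ (1 + γ)) μ)
    (hmom : ∀ i, ∫ ω, |S ω i| ^ (1 + γ) ∂μ ≤ M) (hN : 0 < N) (hiid : iIndepFun Sk μ)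
    (hident : ∀ k, IdentDistrib (Sk k) S μ μ) (hγ0 : 0 ≤ γ) (hγ1 : γ ≤ 1) (hR : 0 < R)
    (ht : 0 < t) (hRt : 4 * M ≤ R ^ γ * t) (i j : Fin n) :
    μ {ω | t < |(signCorr (fun k => Sk k ω) - 1) i j|}
      ≤ ENNReal.ofReal (4 * M * R ^ (1 - γ) / (N * t ^ 2) + 4 * M / (R ^ γ * t)) := by
  set g := fun x : EuclideanSpace ℝ (Fin n) => Real.sign (x i) * x j
  have hg : Measurable g := measurable_sign_apply_mul_apply i j
  have hgS : AEStronglyMeasurable (fun ω => g (S ω)) μ := (hg.comp hS).aestronglyMeasurable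
  have hdom : ∀ ω, |g (S ω)| ^ (1 + γ) ≤ |S ω j| ^ (1 + γ) := fun ω =>
    Real.rpow_le_rpow (abs_nonneg _) (Real.abs_sign_mul_le _ _) (by linarith)
  have hmomint : Integrable (fun ω => |g (S ω)| ^ (1 + γ)) μ :=
    (hintmom j).mono' ((hg.comp hS).abs.pow_const _).aestronglyMeasurable
      (Filter.Eventually.of_forall fun ω => by
        simpa [abs_of_nonneg (Real.rpow_nonneg (abs_nonneg _) _)] using hdom ω)
  have hevent : ∀ ω, (signCorr (fun k => Sk k ω) - 1) i j
      = (N : ℝ)⁻¹ * ∑ k, g (Sk k ω) - ∫ ω, g (S ω) ∂μ := fun ω => by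
    rw [integral_sign_mul_eq_one_apply hS habs hnorm]
    rfl
  simp only [hevent]
  exact ProbabilityTheory.measure_lt_abs_mean_sub_le hN
    (fun k l hkl => (hiid.indepFun hkl).comp hg hg) (fun k => (hident k).comp hg)
    ((hint j).mono' hgS (Filter.Eventually.of_forall fun ω => Real.abs_sign_mul_le _ _))
    hmomint ((integral_mono hmomint (hintmom j) hdom).trans (hmom j)) hγ0 hγ1 hR ht hRt

end SampleSignCorrelation

theorem empirical_centroidBody_contains_shrunk_l1_ball_general
    {n : ℕ} {Ω : Type*} [MeasureSpace Ω] [IsProbabilityMeasure (ℙ : Measure Ω)]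
    (γ M : ℝ) (hγ : γ ∈ Set.Ioo (0 : ℝ) 1) (hM : 1 < M)
    (S : Ω → EuclideanSpace ℝ (Fin n)) (hS : Measurable S)
    (habs : AbsolutelySymmetric (Measure.map S ℙ))
    (hint : ∀ i, Integrable (fun ω => |S ω i|) ℙ)
    (hnorm : ∀ i, ∫ ω, |S ω i| = 1)
    (hintmom : ∀ i, Integrable (fun ω => |S ω i| ^ (1 + γ)) ℙ)
    (hmom : ∀ i, ∫ ω, |S ω i| ^ (1 + γ) ≤ M)
    (N : ℕ) (Sk : Fin N → Ω → EuclideanSpace ℝ (Fin n))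
    (hiid : iIndepFun Sk ℙ)
    (hident : ∀ k, IdentDistrib (Sk k) S ℙ ℙ)
    (ε' δ' : ℝ) (hε' : ε' ∈ Set.Ioo (0 : ℝ) 1) (hδ' : δ' ∈ Set.Ioo (0 : ℝ) 1)
    (hN : (16 * M * (n : ℝ) ^ 4 / (ε' ^ 2 * δ')) ^ ((1 : ℝ) / 2 + 3 / γ) ≤ (N : ℝ)) :
    1 - ENNReal.ofReal δ' ≤
      ℙ {ω | (1 - ε') • {x : EuclideanSpace ℝ (Fin n) | ∑ i, |x i| ≤ 1} ⊆
          centroidBody (empiricalMeasure fun k => Sk k ω)} := by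
  obtain ⟨hγ0, hγ1⟩ := hγ
  obtain ⟨hε0, hε1⟩ := hε'
  obtain ⟨hδ0, hδ1⟩ := hδ'
  refine one_sub_le_measure_of_forall_notMem (ι := Fin n × Fin n)
    (B := fun p => {ω | ε' / n < |(signCorr (fun k => Sk k ω) - 1) p.1 p.2|}) ?_ fun ω hω => ?_
  · rintro ⟨i, j⟩
    have hn : 0 < n := i.pos
    obtain ⟨R, hR, hRN, hRt, hbound⟩ := exists_truncation_level hγ0 hM hε0 hε1 hδ0 hδ1 hn hN
    refine (measure_lt_abs_signCorr_sub_one_le hS habs hint hnorm hintmom hmom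
      (Nat.cast_pos.1 (hR.trans_le hRN)) hiid hident hγ0.le hγ1.le hR (by positivity) hRt i j).trans
      ((ENNReal.ofReal_le_ofReal hbound).trans_eq ?_)
    rw [ENNReal.ofReal_div_of_pos (by positivity)]
    simp [sq]
  · have hsum : ∀ i, ∑ j, |(signCorr (fun k => Sk k ω) - 1) i j| ≤ ε' := fun i => by
      have hn : (n : ℝ) ≠ 0 := Nat.cast_ne_zero.2 i.pos.ne'
      calc ∑ j, |(signCorr (fun k => Sk k ω) - 1) i j| ≤ ∑ _j : Fin n, ε' / n :=
            Finset.sum_le_sum fun j _ => not_lt.1 (hω (i, j))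
        _ = ε' := by simp [field]
    exact smul_l1Ball_subset_centroidBody_empiricalMeasure _ hε1.le hsum

/-- for `S` absolutely symmetric with `E|Sᵢ| = 1` and `(1+γ)`-moments bounded by
`M`, and `Y` uniform on `N ≥ (16Mn⁴/((ε')²δ'))^{1/2+3/γ}` i.i.d. samples of `S`, with
probability at least `1 − δ'` one has `(1−ε')B₁ⁿ ⊆ ΓY`. -/
theorem empirical_centroidBody_contains_shrunk_l1_ball
    {n : ℕ} {Ω : Type*} [MeasureSpace Ω] [IsProbabilityMeasure (ℙ : Measure Ω)]
    (γ M : ℝ) (hγ : γ ∈ Set.Ioo (0 : ℝ) 1) (hM : 1 < M)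
    (S : Ω → EuclideanSpace ℝ (Fin n)) (hS : Measurable S)
    (habs : AbsolutelySymmetric (Measure.map S ℙ))
    (hint : ∀ i, Integrable (fun ω => |S ω i|) ℙ)
    (hnorm : ∀ i, ∫ ω, |S ω i| = 1)
    (hintmom : ∀ i, Integrable (fun ω => |S ω i| ^ (1 + γ)) ℙ)
    (hmom : ∀ i, ∫ ω, |S ω i| ^ (1 + γ) ≤ M)
    (N : ℕ) (Sk : Fin N → Ω → EuclideanSpace ℝ (Fin n))
    (hSk : ∀ k, Measurable (Sk k))
    (hiid : iIndepFun Sk ℙ)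
    (hident : ∀ k, IdentDistrib (Sk k) S ℙ ℙ)
    (ε' δ' : ℝ) (hε' : ε' ∈ Set.Ioo (0 : ℝ) 1) (hδ' : δ' ∈ Set.Ioo (0 : ℝ) 1)
    (hN : (16 * M * (n : ℝ) ^ 4 / (ε' ^ 2 * δ')) ^ ((1 : ℝ) / 2 + 3 / γ) ≤ (N : ℝ)) :
    1 - ENNReal.ofReal δ' ≤
      ℙ {ω | (1 - ε') • {x : EuclideanSpace ℝ (Fin n) | ∑ i, |x i| ≤ 1} ⊆
          centroidBody (empiricalMeasure fun k => Sk k ω)} :=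
  empirical_centroidBody_contains_shrunk_l1_ball_general γ M hγ hM S hS habs hint hnorm hintmom hmom
    N Sk hiid hident ε' δ' hε' hδ' hN
end

section
/- Let X = AS be an ICA model in ℝⁿ where each Sᵢ is symmetrically distributed with E|Sᵢ| = 1, and suppose σ_min(A) > 0. Then the centroid body satisfies A·B₁ⁿ ⊆ ΓX, and in particular ΓX contains the Euclidean ball of radius σ_min(A)/√n centered at the origin; moreover ΓX ⊆ A·[−1,1]ⁿ, so ΓX is contained in the Euclidean ball of radius √n·σ_max(A). -/
/-!
The support function of `ΓX` is `u ↦ E|⟨Aᵀu, S⟩|`, so `ΓX = A·ΓS` and it suffices to show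
`B₁ⁿ ⊆ ΓS ⊆ [-1,1]ⁿ`. Testing `ΓS` against `±eᵢ` gives the cube, since `E|Sᵢ| = 1`. For the
`ℓ₁`-ball one needs `E|⟨c, S⟩| ≥ |cᵢ|`: with `T = cᵢSᵢ` and `R` the rest of the sum, `T` is
symmetric and independent of `R`, so `(T, R)` and `(-T, R)` are equidistributed and
`2 E|T| ≤ E|T + R| + E|T - R| = 2 E|T + R|`. The Euclidean balls then come from
`‖x‖₁ ≤ √n ‖x‖₂`, `‖x‖₂ ≤ √n ‖x‖_∞` and `σ_min(A) ‖x‖ ≤ ‖Ax‖ ≤ σ_max(A) ‖x‖`.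
-/

open MeasureTheory ProbabilityTheory Matrix
open scoped RealInnerProductSpace ENNReal

/-- The largest singular value (spectral norm) of a square real matrix. -/
noncomputable def sigmaMax {n : ℕ} (M : Matrix (Fin n) (Fin n) ℝ) : ℝ :=
  ‖(Matrix.toEuclideanCLM (𝕜 := ℝ) M : EuclideanSpace ℝ (Fin n) →L[ℝ] EuclideanSpace ℝ (Fin n))‖

/-- The smallest singular value of a square real matrix. -/
noncomputable def sigmaMin {n : ℕ} (M : Matrix (Fin n) (Fin n) ℝ) : ℝ :=
  ⨅ x : Metric.sphere (0 : EuclideanSpace ℝ (Fin n)) 1,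
    ‖(Matrix.toEuclideanCLM (𝕜 := ℝ) M) (x : EuclideanSpace ℝ (Fin n))‖

section SymmetricIndependent

variable {Ω : Type*} [MeasurableSpace Ω] {μ : Measure Ω} [IsFiniteMeasure μ]

lemma integral_abs_add_eq_integral_abs_sub {T R : Ω → ℝ} (hsym : IdentDistrib T (-T) μ μ)
    (hR : AEMeasurable R μ) (hTR : T ⟂ᵢ[μ] R) :
    ∫ ω, |T ω + R ω| ∂μ = ∫ ω, |T ω - R ω| ∂μ := by
  have hpair : IdentDistrib (fun ω ↦ (T ω, R ω)) (fun ω ↦ (-T ω, R ω)) μ μ :=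
    hsym.prodMk (.refl hR) hTR hTR.neg_left
  have := (hpair.comp (continuous_fst.add continuous_snd).abs.measurable).integral_eq
  simpa [Function.comp_def, neg_add_eq_sub, abs_sub_comm] using this

lemma integral_abs_le_integral_abs_add {T R : Ω → ℝ} (hsym : IdentDistrib T (-T) μ μ)
    (hTR : T ⟂ᵢ[μ] R) (hT : Integrable T μ) (hR : Integrable R μ) :
    ∫ ω, |T ω| ∂μ ≤ ∫ ω, |T ω + R ω| ∂μ := by
  have hpt : ∀ ω, 2 * |T ω| ≤ |T ω + R ω| + |T ω - R ω| := fun ω => by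
    simpa [← two_mul, abs_mul] using abs_add_le (T ω + R ω) (T ω - R ω)
  have hadd : Integrable (fun ω => |T ω + R ω|) μ := (hT.add hR).abs
  have hsub : Integrable (fun ω => |T ω - R ω|) μ := (hT.sub hR).abs
  have hmono : ∫ ω, 2 * |T ω| ∂μ ≤ ∫ ω, |T ω + R ω| + |T ω - R ω| ∂μ :=
    integral_mono (hT.abs.const_mul 2) (hadd.add hsub) hpt
  rw [integral_const_mul, integral_add hadd hsub,
    ← integral_abs_add_eq_integral_abs_sub hsym hR.aemeasurable hTR] at hmono
  linarith

lemma abs_mul_integral_abs_le_integral_abs_sum {ι : Type*} [Fintype ι] {f : ι → Ω → ℝ}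
    (hm : ∀ j, Measurable (f j)) (hindep : iIndepFun f μ)
    (hsym : ∀ j, IdentDistrib (f j) (-f j) μ μ) (hint : ∀ j, Integrable (f j) μ)
    (c : ι → ℝ) (i : ι) :
    |c i| * ∫ ω, |f i ω| ∂μ ≤ ∫ ω, |∑ j, c j * f j ω| ∂μ := by
  classical
  set g : ι → Ω → ℝ := fun j ω => c j * f j ω with hg
  have hgm : ∀ j, Measurable (g j) := fun j => (hm j).const_mul (c j)
  have hgsym : IdentDistrib (g i) (-g i) μ μ := by
    simpa [Function.comp_def, hg, Pi.neg_def] using (hsym i).comp (measurable_const_mul (c i))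
  have hTR : g i ⟂ᵢ[μ] ∑ j ∈ Finset.univ.erase i, g j :=
    ((hindep.comp _ fun j => measurable_const_mul (c j)).indepFun_finsetSum_of_notMem hgm
      (Finset.notMem_erase i Finset.univ)).symm
  calc |c i| * ∫ ω, |f i ω| ∂μ = ∫ ω, |g i ω| ∂μ := by
        simp only [hg, abs_mul, integral_const_mul]
    _ ≤ ∫ ω, |g i ω + (∑ j ∈ Finset.univ.erase i, g j) ω| ∂μ :=
        integral_abs_le_integral_abs_add hgsym hTR ((hint i).const_mul _)
          (integrable_finsetSum' _ fun j _ => (hint j).const_mul _)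
    _ = ∫ ω, |∑ j, c j * f j ω| ∂μ := by
        congr with ω
        simp only [Finset.sum_apply, hg]
        exact congrArg abs (Finset.add_sum_erase _ (fun j => c j * f j ω) (Finset.mem_univ i))

end SymmetricIndependent

section RandomVector

variable {n : ℕ} {Ω : Type*} [MeasurableSpace Ω] {μ : Measure Ω}
  {S : Ω → EuclideanSpace ℝ (Fin n)}

lemma integral_abs_inner_map (hS : AEMeasurable S μ) (u : EuclideanSpace ℝ (Fin n)) :
    ∫ z, |⟪z, u⟫| ∂(μ.map S) = ∫ ω, |⟪S ω, u⟫| ∂μ :=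
  integral_map hS (by fun_prop : Continuous fun z => |⟪z, u⟫|).aestronglyMeasurable

lemma centroidBody_map_subset_cube (hS : AEMeasurable S μ)
    (hnorm : ∀ i, ∫ ω, |S ω i| ∂μ = 1) :
    centroidBody (μ.map S) ⊆ {x | ∀ i, |x i| ≤ 1} := by
  intro y hy i
  have hcoord : ∀ s : ℝ, s * y i ≤ |s| := fun s => by
    have := hy (EuclideanSpace.single i s)
    rw [integral_abs_inner_map hS] at this
    simpa [EuclideanSpace.inner_single_right, abs_mul, integral_const_mul, hnorm i] using this
  have hle := hcoord 1
  have hge := hcoord (-1)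
  norm_num at hle hge
  exact abs_le.mpr ⟨by linarith, hle⟩

lemma l1Ball_subset_centroidBody_map [IsProbabilityMeasure μ] (hS : Measurable S)
    (hindep : iIndepFun (fun i ω => S ω i) μ)
    (hsym : ∀ i, IdentDistrib (fun ω => S ω i) (fun ω => -S ω i) μ μ)
    (hint : ∀ i, Integrable (fun ω => S ω i) μ) (hnorm : ∀ i, ∫ ω, |S ω i| ∂μ = 1) :
    {x | ∑ i, |x i| ≤ 1} ⊆ centroidBody (μ.map S) := by
  intro x hx u
  rw [integral_abs_inner_map hS.aemeasurable]
  set E := ∫ ω, |⟪S ω, u⟫| ∂μ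
  have hcoord : ∀ i, |u i| ≤ E := fun i => by
    simpa [E, hnorm i, PiLp.inner_apply, mul_comm] using
      abs_mul_integral_abs_le_integral_abs_sum (fun j => by fun_prop) hindep hsym hint u i
  calc ⟪x, u⟫ = ∑ i, x i * u i := by simp [PiLp.inner_apply, mul_comm]
    _ ≤ ∑ i, |x i| * E := Finset.sum_le_sum fun i _ =>
        (le_abs_self _).trans ((abs_mul _ _).trans_le
          (mul_le_mul_of_nonneg_left (hcoord i) (abs_nonneg _)))
    _ = (∑ i, |x i|) * E := (Finset.sum_mul ..).symm
    _ ≤ E := mul_le_of_le_one_left (integral_nonneg fun _ => abs_nonneg _) hx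

end RandomVector

namespace centroidBody

variable {n : ℕ}

lemma image_subset_map (μ : Measure (EuclideanSpace ℝ (Fin n)))
    (L : EuclideanSpace ℝ (Fin n) →L[ℝ] EuclideanSpace ℝ (Fin n)) :
    L '' centroidBody μ ⊆ centroidBody (μ.map L) := by
  rintro _ ⟨x, hx, rfl⟩ u
  rw [integral_abs_inner_map L.continuous.aemeasurable]
  simpa only [ContinuousLinearMap.adjoint_inner_right] using hx (ContinuousLinearMap.adjoint L u)

lemma map_continuousLinearEquiv (μ : Measure (EuclideanSpace ℝ (Fin n)))
    (L : EuclideanSpace ℝ (Fin n) ≃L[ℝ] EuclideanSpace ℝ (Fin n)) :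
    centroidBody (μ.map L) = L '' centroidBody μ := by
  refine (image_subset_map μ L).antisymm' fun y hy => ⟨L.symm y, ?_, L.apply_symm_apply y⟩
  have := image_subset_map (μ.map L) (L.symm : _ →L[ℝ] _) ⟨y, hy, rfl⟩
  simp only [ContinuousLinearEquiv.coe_coe] at this
  rwa [Measure.map_map L.symm.continuous.measurable L.continuous.measurable,
    L.symm_comp_self, Measure.map_id] at this

end centroidBody


lemma EuclideanSpace.sum_abs_le_sqrt_card_mul_norm {ι : Type*} [Fintype ι]
    (x : EuclideanSpace ℝ ι) : ∑ i, |x i| ≤ √(Fintype.card ι) * ‖x‖ := by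
  have hcs : (∑ i, |x i|) ^ 2 ≤ Fintype.card ι * ∑ i, |x i| ^ 2 := by
    simpa using sq_sum_le_card_mul_sum_sq (s := Finset.univ) (f := fun i => |x i|)
  calc ∑ i, |x i| = √((∑ i, |x i|) ^ 2) := (Real.sqrt_sq (by positivity)).symm
    _ ≤ √(Fintype.card ι * ∑ i, |x i| ^ 2) := Real.sqrt_le_sqrt hcs
    _ = √(Fintype.card ι) * ‖x‖ := by
        rw [Real.sqrt_mul (Nat.cast_nonneg _), EuclideanSpace.norm_eq]
        simp only [Real.norm_eq_abs]

lemma EuclideanSpace.norm_le_sqrt_card_of_abs_le_one {ι : Type*} [Fintype ι]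
    {x : EuclideanSpace ℝ ι} (hx : ∀ i, |x i| ≤ 1) : ‖x‖ ≤ √(Fintype.card ι) := by
  have := (EuclideanSpace.basisFun ι ℝ).norm_le_card_mul_iSup_norm_inner x
  refine this.trans (mul_le_of_le_one_right (Real.sqrt_nonneg _) ?_)
  exact Real.iSup_le (fun i => by simpa using hx i) zero_le_one

section SingularValues

variable {n : ℕ}

lemma sigmaMin_mul_norm_le (M : Matrix (Fin n) (Fin n) ℝ) (x : EuclideanSpace ℝ (Fin n)) :
    sigmaMin M * ‖x‖ ≤ ‖toEuclideanLin M x‖ := by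
  rcases eq_or_ne x 0 with rfl | hx
  · simp
  have hnx : 0 < ‖x‖ := norm_pos_iff.mpr hx
  have hunit : ‖x‖⁻¹ • x ∈ Metric.sphere (0 : EuclideanSpace ℝ (Fin n)) 1 := by
    simp [norm_smul, hnx.ne']
  have hle : sigmaMin M ≤ ‖toEuclideanCLM (𝕜 := ℝ) M (‖x‖⁻¹ • x)‖ :=
    ciInf_le ⟨0, by rintro _ ⟨z, rfl⟩; exact norm_nonneg _⟩
      (⟨_, hunit⟩ : Metric.sphere (0 : EuclideanSpace ℝ (Fin n)) 1)
  rw [map_smul, norm_smul, norm_inv, norm_norm] at hle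
  calc sigmaMin M * ‖x‖ ≤ ‖x‖⁻¹ * ‖toEuclideanLin M x‖ * ‖x‖ := by gcongr; exact hle
    _ = ‖toEuclideanLin M x‖ := by field_simp

lemma norm_toEuclideanLin_le_sqrt_mul_sigmaMax (M : Matrix (Fin n) (Fin n) ℝ)
    {x : EuclideanSpace ℝ (Fin n)} (hx : ∀ i, |x i| ≤ 1) :
    ‖toEuclideanLin M x‖ ≤ √n * sigmaMax M := by
  calc ‖toEuclideanLin M x‖ ≤ sigmaMax M * ‖x‖ := (toEuclideanCLM (𝕜 := ℝ) M).le_opNorm x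
    _ ≤ sigmaMax M * √n := by
        gcongr
        · exact norm_nonneg _
        · simpa using EuclideanSpace.norm_le_sqrt_card_of_abs_le_one hx
    _ = √n * sigmaMax M := mul_comm _ _

lemma sum_abs_le_one_of_norm_toEuclideanLin_le {M : Matrix (Fin n) (Fin n) ℝ}
    (hσ : 0 < sigmaMin M) {x : EuclideanSpace ℝ (Fin n)}
    (hx : ‖toEuclideanLin M x‖ ≤ sigmaMin M / √n) : ∑ i, |x i| ≤ 1 := by
  have hl1 : ∑ i, |x i| ≤ √n * ‖x‖ := by
    simpa using EuclideanSpace.sum_abs_le_sqrt_card_mul_norm x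
  -- `√n` vanishes when `n = 0`, and then `sigmaMin M / √n = 0`
  have hrad : √n * (sigmaMin M / √n) ≤ sigmaMin M := by
    rcases eq_or_ne (√n) 0 with h0 | h0
    · simp [h0, hσ.le]
    · rw [mul_div_cancel₀ _ h0]
  have hscaled : sigmaMin M * (√n * ‖x‖) ≤ sigmaMin M * 1 :=
    calc sigmaMin M * (√n * ‖x‖) = √n * (sigmaMin M * ‖x‖) := by ring
      _ ≤ √n * (sigmaMin M / √n) := by
          gcongr
          exact (sigmaMin_mul_norm_le M x).trans hx
      _ ≤ sigmaMin M * 1 := by rw [mul_one]; exact hrad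
  exact hl1.trans (le_of_mul_le_mul_left hscaled hσ)

end SingularValues

/-- in an ICA model `X = AS` with symmetric components and `E|Sᵢ| = 1`, assuming
`σ_min(A) > 0`, the centroid body satisfies `A·B₁ⁿ ⊆ ΓX ⊆ A·[−1,1]ⁿ`; in particular `ΓX`
contains the Euclidean ball of radius `σ_min(A)/√n` and is contained in the Euclidean ball of
radius `√n·σ_max(A)`. -/
theorem centroidBody_of_ica_model_inner_outer_bounds
    {n : ℕ} {Ω : Type*} [MeasureSpace Ω] [IsProbabilityMeasure (ℙ : Measure Ω)]
    (S : Ω → EuclideanSpace ℝ (Fin n)) (hS : Measurable S)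
    (hindep : iIndepFun (fun i ω => S ω i) ℙ)
    (hsym : ∀ i, Measure.map (fun ω => S ω i) ℙ = Measure.map (fun ω => -S ω i) ℙ)
    (hint : ∀ i, Integrable (fun ω => |S ω i|) ℙ)
    (hnorm : ∀ i, ∫ ω, |S ω i| = 1)
    (A : Matrix (Fin n) (Fin n) ℝ) (hA : IsUnit A) (hσ : 0 < sigmaMin A)
    (X : Ω → EuclideanSpace ℝ (Fin n))
    (hX : X = fun ω => Matrix.toEuclideanLin A (S ω)) :
    (⇑(Matrix.toEuclideanLin A)) '' {x : EuclideanSpace ℝ (Fin n) | ∑ i, |x i| ≤ 1} ⊆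
        centroidBody (Measure.map X ℙ) ∧
    Metric.closedBall (0 : EuclideanSpace ℝ (Fin n)) (sigmaMin A / Real.sqrt n) ⊆
        centroidBody (Measure.map X ℙ) ∧
    centroidBody (Measure.map X ℙ) ⊆
        (⇑(Matrix.toEuclideanLin A)) '' {x : EuclideanSpace ℝ (Fin n) | ∀ i, |x i| ≤ 1} ∧
    centroidBody (Measure.map X ℙ) ⊆
        Metric.closedBall (0 : EuclideanSpace ℝ (Fin n)) (Real.sqrt n * sigmaMax A) := by
  set L := ContinuousLinearEquiv.unitsEquiv ℝ _
    (hA.map (toEuclideanCLM (n := Fin n) (𝕜 := ℝ))).unit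
  have hlaw : Measure.map X ℙ = (Measure.map S ℙ).map L := by
    rw [hX, Measure.map_map L.continuous.measurable hS]
    rfl
  have hΓ : centroidBody (Measure.map X ℙ) = L '' centroidBody (Measure.map S ℙ) :=
    hlaw ▸ centroidBody.map_continuousLinearEquiv _ L
  have hinner : L '' {x | ∑ i, |x i| ≤ 1} ⊆ centroidBody (Measure.map X ℙ) :=
    hΓ ▸ Set.image_mono (l1Ball_subset_centroidBody_map hS hindep
      (fun i => ⟨by fun_prop, by fun_prop, hsym i⟩)
      (fun i => (integrable_norm_iff (by fun_prop)).mp (hint i)) hnorm)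
  have houter : centroidBody (Measure.map X ℙ) ⊆ L '' {x | ∀ i, |x i| ≤ 1} :=
    hΓ ▸ Set.image_mono (centroidBody_map_subset_cube hS.aemeasurable hnorm)
  refine ⟨hinner, fun y hy => hinner ⟨L.symm y, ?_, L.apply_symm_apply y⟩, houter, ?_⟩
  · refine sum_abs_le_one_of_norm_toEuclideanLin_le hσ ?_
    rw [show toEuclideanLin A (L.symm y) = y from L.apply_symm_apply y]
    simpa using hy
  · refine houter.trans ?_
    rintro _ ⟨x, hx, rfl⟩
    exact mem_closedBall_zero_iff.mpr (norm_toEuclideanLin_le_sqrt_mul_sigmaMax A hx)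
end
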